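/- arXiv:1205.5427 — 6 statements merged into one kernel-verified Lean document; each statement's English description precedes it below -/
import Mathlib

section
/- In the Artin braid group B_m, for all indices 1 ≤ a < c < b ≤ m−1 the following identity holds: (σ_a^{-1} σ_{a+1}^{-1} ⋯ σ_b^{-1}) · σ_b · (σ_a^{-1} σ_{a+1}^{-1} ⋯ σ_b^{-1})^{-1} = W · σ_c · W^{-1}, where W = (σ_b σ_{b-1} ⋯ σ_{c+1}) · (σ_a^{-1} σ_{a+1}^{-1} ⋯ σ_c^{-1}). -/
/-- The ascending word `σ a * σ (a+1) * ⋯ * σ b` (empty product if `b + 1 ≤ a`). -/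
def ascWord {G : Type*} [Group G] (σ : ℕ → G) (a b : ℕ) : G :=
  ((List.range (b + 1 - a)).map (fun i => σ (a + i))).prod

/-- The descending word `σ b * σ (b-1) * ⋯ * σ a` (empty product if `b + 1 ≤ a`). -/
def descWord {G : Type*} [Group G] (σ : ℕ → G) (a b : ℕ) : G :=
  ((List.range (b + 1 - a)).map (fun i => σ (b - i))).prod

section Aux
variable {G : Type*} [Group G] (σ : ℕ → G)

lemma braid_inv_conj {x y : G} (h : x * y * x = y * x * y) :
    x⁻¹ * y * x = y * x * y⁻¹ := by
  rw [eq_mul_inv_iff_mul_eq, mul_assoc, mul_assoc, inv_mul_eq_iff_eq_mul,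
    ← mul_assoc, ← mul_assoc, h]

lemma ascWord_empty (a b : ℕ) (h : b + 1 ≤ a) : ascWord σ a b = 1 := by
  unfold ascWord
  have : b + 1 - a = 0 := by omega
  simp [this]

lemma ascWord_self (a : ℕ) : ascWord σ a a = σ a := by
  unfold ascWord
  have : a + 1 - a = 1 := by omega
  simp [this, List.range_succ]

lemma ascWord_succ (a b : ℕ) (h : a ≤ b + 1) :
    ascWord σ a (b + 1) = ascWord σ a b * σ (b + 1) := by
  unfold ascWord
  have h1 : b + 1 + 1 - a = (b + 1 - a) + 1 := by omega
  have h2 : a + (b + 1 - a) = b + 1 := by omega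
  rw [h1, List.range_succ, List.map_append, List.prod_append]
  simp [h2]

lemma descWord_empty (a b : ℕ) (h : b + 1 ≤ a) : descWord σ a b = 1 := by
  unfold descWord
  have : b + 1 - a = 0 := by omega
  simp [this]

lemma descWord_succ (a b : ℕ) (h : a ≤ b + 1) :
    descWord σ a (b + 1) = σ (b + 1) * descWord σ a b := by
  unfold descWord
  have h1 : b + 1 + 1 - a = (b + 1 - a) + 1 := by omega
  rw [h1, List.range_succ_eq_map, List.map_cons, List.prod_cons, List.map_map]
  have h3 : ((fun i => σ (b + 1 - i)) ∘ Nat.succ) = fun i => σ (b - i) := by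
    funext i
    simp only [Function.comp_apply]
    congr 1
    omega
  rw [h3]
  norm_num

lemma descWord_split (a c : ℕ) (h1 : a ≤ c) :
    ∀ b, c ≤ b → descWord σ a b = descWord σ (c + 1) b * descWord σ a c := by
  intro b hb
  induction b, hb using Nat.le_induction with
  | base => rw [descWord_empty σ (c+1) c (by omega), one_mul]
  | succ n hn ih =>
      rw [descWord_succ σ a n (by omega), descWord_succ σ (c+1) n (by omega), ih, mul_assoc]

lemma commute_ascWord (x : G) (a b : ℕ)
    (h : ∀ i, a ≤ i → i ≤ b → Commute x (σ i)) : Commute x (ascWord σ a b) := by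
  unfold ascWord
  apply Commute.list_prod_right
  intro y hy
  simp only [List.mem_map, List.mem_range] at hy
  obtain ⟨i, hi, rfl⟩ := hy
  exact h (a + i) (by omega) (by omega)

end Aux

section Main
variable {G : Type*} [Group G] (m : ℕ) (σ : ℕ → G)
variable (hcomm : ∀ i j, 1 ≤ i → i + 2 ≤ j → j ≤ m - 1 → σ i * σ j = σ j * σ i)
variable (hbraid : ∀ i, 1 ≤ i → i + 1 ≤ m - 1 →
      σ i * σ (i + 1) * σ i = σ (i + 1) * σ i * σ (i + 1))

include hcomm hbraid in
lemma keyL (a : ℕ) (ha : 1 ≤ a) :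
    ∀ b, a ≤ b → b + 1 ≤ m - 1 →
    ascWord (fun i => (σ i)⁻¹) a b * σ (b + 1) * (ascWord (fun i => (σ i)⁻¹) a b)⁻¹ =
      descWord σ (a + 1) (b + 1) * σ a * (descWord σ (a + 1) (b + 1))⁻¹ := by
  intro b hab
  induction b, hab using Nat.le_induction with
  | base =>
      intro hm
      rw [ascWord_self, descWord_succ σ (a+1) a (le_refl _), descWord_empty σ (a+1) a (le_refl _),
        mul_one]
      rw [inv_inv]
      exact braid_inv_conj (hbraid a ha hm)
  | succ n hn ih =>
      intro hm
      have ihn := ih (by omega)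
      set τ : ℕ → G := fun i => (σ i)⁻¹ with hτ
      have hA : ascWord τ a (n + 1) = ascWord τ a n * (σ (n + 1))⁻¹ :=
        ascWord_succ τ a n (by omega)
      have hbr : (σ (n+1))⁻¹ * σ (n + 2) * σ (n + 1) = σ (n + 2) * σ (n + 1) * (σ (n + 2))⁻¹ :=
        braid_inv_conj (hbraid (n + 1) (by omega) (by omega))
      have hC : Commute (σ (n + 2)) (ascWord τ a n) := by
        apply commute_ascWord
        intro i hi1 hi2
        have hc : Commute (σ i) (σ (n + 2)) := hcomm i (n + 2) (by omega) (by omega) (by omega)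
        exact hc.symm.inv_right
      have e1 : ascWord τ a n * σ (n + 2) = σ (n + 2) * ascWord τ a n := hC.symm.eq
      have e2 : (σ (n + 2))⁻¹ * (ascWord τ a n)⁻¹ = (ascWord τ a n)⁻¹ * (σ (n + 2))⁻¹ := by
        rw [← mul_inv_rev, ← mul_inv_rev, e1]
      calc ascWord τ a (n+1) * σ (n + 1 + 1) * (ascWord τ a (n+1))⁻¹
          = ascWord τ a n * ((σ (n+1))⁻¹ * σ (n + 2) * σ (n + 1)) * (ascWord τ a n)⁻¹ := by
            rw [hA]; group
        _ = (ascWord τ a n * σ (n + 2)) * σ (n + 1) * ((σ (n + 2))⁻¹ * (ascWord τ a n)⁻¹) := by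
            rw [hbr]; group
        _ = (σ (n + 2) * ascWord τ a n) * σ (n + 1) * ((ascWord τ a n)⁻¹ * (σ (n + 2))⁻¹) := by
            rw [e1, e2]
        _ = σ (n + 2) * (ascWord τ a n * σ (n + 1) * (ascWord τ a n)⁻¹) * (σ (n + 2))⁻¹ := by
            group
        _ = σ (n + 2) * (descWord σ (a+1) (n+1) * σ a * (descWord σ (a+1) (n+1))⁻¹) * (σ (n + 2))⁻¹ := by
            rw [ihn]
        _ = descWord σ (a+1) (n + 1 + 1) * σ a * (descWord σ (a+1) (n + 1 + 1))⁻¹ := by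
            rw [descWord_succ σ (a+1) (n+1) (by omega)]
            group

include hcomm hbraid in
lemma mainL (a b : ℕ) (ha : 1 ≤ a) (hab : a < b) (hb : b ≤ m - 1) :
    ascWord (fun i => (σ i)⁻¹) a b * σ b * (ascWord (fun i => (σ i)⁻¹) a b)⁻¹ =
      descWord σ (a + 1) b * σ a * (descWord σ (a + 1) b)⁻¹ := by
  obtain ⟨n, rfl⟩ : ∃ n, b = n + 1 := ⟨b - 1, by omega⟩
  have hA : ascWord (fun i => (σ i)⁻¹) a (n + 1)
      = ascWord (fun i => (σ i)⁻¹) a n * (σ (n + 1))⁻¹ :=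
    ascWord_succ _ a n (by omega)
  rw [hA]
  have hk := keyL m σ hcomm hbraid a ha n (by omega) (by omega)
  calc ascWord (fun i => (σ i)⁻¹) a n * (σ (n+1))⁻¹ * σ (n + 1) *
        (ascWord (fun i => (σ i)⁻¹) a n * (σ (n + 1))⁻¹)⁻¹
      = ascWord (fun i => (σ i)⁻¹) a n * σ (n + 1) * (ascWord (fun i => (σ i)⁻¹) a n)⁻¹ := by
        group
    _ = _ := hk

end Main

/-- In the Artin braid group `B_m` (formulated universally: in any group with elements
`σ 1, …, σ (m-1)` satisfying the Artin braid relations), for all `1 ≤ a < c < b ≤ m - 1`,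
`(σ_a⁻¹ σ_{a+1}⁻¹ ⋯ σ_b⁻¹) σ_b (σ_a⁻¹ σ_{a+1}⁻¹ ⋯ σ_b⁻¹)⁻¹ = W σ_c W⁻¹` where
`W = (σ_b σ_{b-1} ⋯ σ_{c+1}) (σ_a⁻¹ σ_{a+1}⁻¹ ⋯ σ_c⁻¹)`. -/
theorem spiral_halftwist_middle_identity_inv {G : Type*} [Group G] (m : ℕ) (σ : ℕ → G)
    (hcomm : ∀ i j, 1 ≤ i → i + 2 ≤ j → j ≤ m - 1 → σ i * σ j = σ j * σ i)
    (hbraid : ∀ i, 1 ≤ i → i + 1 ≤ m - 1 →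
      σ i * σ (i + 1) * σ i = σ (i + 1) * σ i * σ (i + 1))
    (a b c : ℕ) (ha : 1 ≤ a) (hac : a < c) (hcb : c < b) (hb : b ≤ m - 1) :
    ascWord (fun i => (σ i)⁻¹) a b * σ b * (ascWord (fun i => (σ i)⁻¹) a b)⁻¹ =
      (descWord σ (c + 1) b * ascWord (fun i => (σ i)⁻¹) a c) * σ c *
        (descWord σ (c + 1) b * ascWord (fun i => (σ i)⁻¹) a c)⁻¹ := by
  have h1 := mainL m σ hcomm hbraid a b ha (by omega) hb
  have h2 := mainL m σ hcomm hbraid a c ha hac (by omega)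
  have hsplit : descWord σ (a + 1) b = descWord σ (c + 1) b * descWord σ (a + 1) c :=
    descWord_split σ (a + 1) c (by omega) b (by omega)
  rw [h1, hsplit]
  calc descWord σ (c+1) b * descWord σ (a+1) c * σ a *
        (descWord σ (c+1) b * descWord σ (a+1) c)⁻¹
      = descWord σ (c + 1) b * (descWord σ (a + 1) c * σ a *
        (descWord σ (a + 1) c)⁻¹) * (descWord σ (c + 1) b)⁻¹ := by group
    _ = descWord σ (c + 1) b * (ascWord (fun i => (σ i)⁻¹) a c * σ c *
        (ascWord (fun i => (σ i)⁻¹) a c)⁻¹) * (descWord σ (c + 1) b)⁻¹ := by rw [h2]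
    _ = _ := by group
end

section
/- In the Artin braid group B_{n+1} with generators σ_1, …, σ_n, the n-th power of the element σ_n^2 σ_{n-1} σ_{n-2} ⋯ σ_1 equals the full twist, i.e. (σ_n^2 · σ_{n-1} σ_{n-2} ⋯ σ_1)^n = (σ_1 σ_2 ⋯ σ_n)^{n+1}. (This identity, noted for n = 3 as (σ_9^2 σ_8 σ_7)^3 = Δ_{7,10}^2 and underlying the relation Δ_{k+1}^{2n} = Δ_{nk+1}^2 for the inclusion B_{k,1} ↪ B_{nk,1}, says that the image under the Kummer lift of the full twist around 0 on n strands, raised to the n-th power, is the positive generator Δ^2_{n+1} of the center of B_{n+1}.) -/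
section
variable {G : Type*} [Group G]

theorem asc_empty (σ : ℕ → G) {a b : ℕ} (h : b + 1 ≤ a) : ascWord σ a b = 1 := by
  unfold ascWord; rw [Nat.sub_eq_zero_of_le h]; rfl

theorem desc_empty (σ : ℕ → G) {a b : ℕ} (h : b + 1 ≤ a) : descWord σ a b = 1 := by
  unfold descWord; rw [Nat.sub_eq_zero_of_le h]; rfl

theorem asc_front (σ : ℕ → G) {a b : ℕ} (h : a ≤ b) :
    ascWord σ a b = σ a * ascWord σ (a+1) b := by
  unfold ascWord
  rw [show b + 1 - a = (b - a) + 1 by omega, show b + 1 - (a+1) = b - a by omega,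
    List.range_succ_eq_map, List.map_cons, List.prod_cons, List.map_map]
  have hf : ((fun i => σ (a + i)) ∘ Nat.succ) = (fun i => σ (a + 1 + i)) := by
    funext i; show σ (a + (i+1)) = σ (a+1+i); congr 1; omega
  rw [hf, Nat.add_zero]

theorem asc_back (σ : ℕ → G) {a b : ℕ} (ha : 1 ≤ a) (h : a ≤ b) :
    ascWord σ a b = ascWord σ a (b-1) * σ b := by
  unfold ascWord
  rw [show b + 1 - a = (b - a) + 1 by omega, show (b-1) + 1 - a = b - a by omega,
    List.range_succ, List.map_append, List.prod_append]
  simp only [List.map_cons, List.map_nil, List.prod_cons, List.prod_nil, mul_one]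
  rw [show a + (b - a) = b by omega]

theorem desc_front (σ : ℕ → G) {a b : ℕ} (ha : 1 ≤ a) (h : a ≤ b) :
    descWord σ a b = σ b * descWord σ a (b-1) := by
  unfold descWord
  rw [show b + 1 - a = (b - a) + 1 by omega, show (b-1) + 1 - a = b - a by omega,
    List.range_succ_eq_map, List.map_cons, List.prod_cons, List.map_map]
  have hf : ((fun i => σ (b - i)) ∘ Nat.succ) = (fun i => σ (b - 1 - i)) := by
    funext i; show σ (b - (i+1)) = σ (b-1-i); congr 1; omega
  rw [hf, Nat.sub_zero]

theorem desc_back (σ : ℕ → G) {a b : ℕ} (h : a ≤ b) :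
    descWord σ a b = descWord σ (a+1) b * σ a := by
  unfold descWord
  rw [show b + 1 - a = (b - a) + 1 by omega, show b + 1 - (a+1) = b - a by omega,
    List.range_succ, List.map_append, List.prod_append]
  simp only [List.map_cons, List.map_nil, List.prod_cons, List.prod_nil, mul_one]
  rw [show b - (b - a) = a by omega]

theorem asc_single (σ : ℕ → G) (a : ℕ) : ascWord σ a a = σ a := by
  rw [asc_front σ (le_refl a), asc_empty σ (by omega), mul_one]

theorem desc_single (σ : ℕ → G) (a : ℕ) : descWord σ a a = σ a := by
  rw [desc_back σ (le_refl a), desc_empty σ (by omega), one_mul]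

theorem asc_split (σ : ℕ → G) {a c : ℕ} (ha : 1 ≤ a) (hac : a ≤ c + 1) :
    ∀ b, c ≤ b → ascWord σ a b = ascWord σ a c * ascWord σ (c+1) b := by
  refine Nat.le_induction ?_ ?_
  · rw [asc_empty σ (le_refl (c+1)), mul_one]
  · intro b hb ih
    rw [asc_back σ ha (show a ≤ b + 1 by omega), asc_back σ (show 1 ≤ c + 1 by omega) (show c + 1 ≤ b + 1 by omega),
      show b + 1 - 1 = b by omega, ih, mul_assoc]

theorem desc_split (σ : ℕ → G) {a c : ℕ} (ha : 1 ≤ a) (hac : a ≤ c + 1) :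
    ∀ b, c ≤ b → descWord σ a b = descWord σ (c+1) b * descWord σ a c := by
  refine Nat.le_induction ?_ ?_
  · rw [desc_empty σ (le_refl (c+1)), one_mul]
  · intro b hb ih
    rw [desc_front σ ha (show a ≤ b + 1 by omega), desc_front σ (show 1 ≤ c + 1 by omega) (show c + 1 ≤ b + 1 by omega),
      show b + 1 - 1 = b by omega, ih, mul_assoc]

theorem swap_mul {c d : G} (h : c * d = d * c) (x : G) : c * (d * x) = d * (c * x) := by
  rw [← mul_assoc, h, mul_assoc]

theorem comm_asc (n : ℕ) (σ : ℕ → G)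
    (hcomm : ∀ i j, 1 ≤ i → i + 2 ≤ j → j ≤ n → σ i * σ j = σ j * σ i)
    {j a b : ℕ} (hj1 : 1 ≤ j) (hjn : j ≤ n) (h1a : 1 ≤ a) (hbn : b ≤ n)
    (hsep : b + 2 ≤ j ∨ j + 2 ≤ a) : Commute (σ j) (ascWord σ a b) := by
  unfold ascWord
  apply Commute.list_prod_right
  intro x hx
  rw [List.mem_map] at hx
  obtain ⟨i, hi, rfl⟩ := hx
  rw [List.mem_range] at hi
  rcases hsep with hs | hs
  · exact (hcomm (a + i) j (by omega) (by omega) hjn).symm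
  · exact hcomm j (a + i) hj1 (by omega) (by omega)

theorem comm_desc (n : ℕ) (σ : ℕ → G)
    (hcomm : ∀ i j, 1 ≤ i → i + 2 ≤ j → j ≤ n → σ i * σ j = σ j * σ i)
    {j a b : ℕ} (hj1 : 1 ≤ j) (hjn : j ≤ n) (h1a : 1 ≤ a) (hbn : b ≤ n)
    (hsep : b + 2 ≤ j ∨ j + 2 ≤ a) : Commute (σ j) (descWord σ a b) := by
  unfold descWord
  apply Commute.list_prod_right
  intro x hx
  rw [List.mem_map] at hx
  obtain ⟨i, hi, rfl⟩ := hx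
  rw [List.mem_range] at hi
  rcases hsep with hs | hs
  · exact (hcomm (b - i) j (by omega) (by omega) hjn).symm
  · exact hcomm j (b - i) hj1 (by omega) (by omega)

theorem braid_assoc (n : ℕ) (σ : ℕ → G)
    (hbraid : ∀ i, 1 ≤ i → i + 1 ≤ n → σ i * σ (i + 1) * σ i = σ (i + 1) * σ i * σ (i + 1))
    {i : ℕ} (h1 : 1 ≤ i) (h2 : i + 1 ≤ n) (x : G) :
    σ i * (σ (i+1) * (σ i * x)) = σ (i+1) * (σ i * (σ (i+1) * x)) := by
  rw [← mul_assoc, ← mul_assoc, hbraid i h1 h2, mul_assoc, mul_assoc]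

theorem braid_assoc' (n : ℕ) (σ : ℕ → G)
    (hbraid : ∀ i, 1 ≤ i → i + 1 ≤ n → σ i * σ (i + 1) * σ i = σ (i + 1) * σ i * σ (i + 1))
    {i : ℕ} (h1 : 1 ≤ i) (h2 : i + 1 ≤ n) (x : G) :
    σ (i+1) * (σ i * (σ (i+1) * x)) = σ i * (σ (i+1) * (σ i * x)) :=
  (braid_assoc n σ hbraid h1 h2 x).symm

theorem asc_shift (n : ℕ) (σ : ℕ → G)
    (hcomm : ∀ i j, 1 ≤ i → i + 2 ≤ j → j ≤ n → σ i * σ j = σ j * σ i)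
    (hbraid : ∀ i, 1 ≤ i → i + 1 ≤ n → σ i * σ (i + 1) * σ i = σ (i + 1) * σ i * σ (i + 1))
    {a b i : ℕ} (ha : 1 ≤ a) (hb : b ≤ n) (hai : a ≤ i) (hib : i + 1 ≤ b) :
    ascWord σ a b * σ i = σ (i+1) * ascWord σ a b := by
  have e1 : ascWord σ a b = ascWord σ a (i+1) * ascWord σ (i+2) b :=
    asc_split σ ha (by omega) b (by omega)
  have e2 : ascWord σ a (i+1) = ascWord σ a (i-1) * σ i * σ (i+1) := by
    rw [asc_back σ ha (show a ≤ i + 1 by omega), show i + 1 - 1 = i by omega,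
      asc_back σ ha hai]
  have hc : Commute (σ i) (ascWord σ (i+2) b) :=
    comm_asc n σ hcomm (by omega) (by omega) (by omega) hb (Or.inr (by omega))
  have hc2 : Commute (σ (i+1)) (ascWord σ a (i-1)) :=
    comm_asc n σ hcomm (by omega) (by omega) ha (by omega) (Or.inl (by omega))
  rw [e1, e2]
  simp only [mul_assoc]
  rw [← hc.eq, braid_assoc n σ hbraid (by omega) (by omega), swap_mul hc2.eq.symm]

theorem desc_shift (n : ℕ) (σ : ℕ → G)
    (hcomm : ∀ i j, 1 ≤ i → i + 2 ≤ j → j ≤ n → σ i * σ j = σ j * σ i)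
    (hbraid : ∀ i, 1 ≤ i → i + 1 ≤ n → σ i * σ (i + 1) * σ i = σ (i + 1) * σ i * σ (i + 1))
    {a b i : ℕ} (ha : 1 ≤ a) (hb : b ≤ n) (hai : a ≤ i) (hib : i + 1 ≤ b) :
    descWord σ a b * σ (i+1) = σ i * descWord σ a b := by
  have e1 : descWord σ a b = descWord σ (i+2) b * descWord σ a (i+1) :=
    desc_split σ ha (by omega) b (by omega)
  have e2 : descWord σ a (i+1) = σ (i+1) * (σ i * descWord σ a (i-1)) := by
    rw [desc_front σ ha (show a ≤ i + 1 by omega), show i + 1 - 1 = i by omega,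
      desc_front σ ha hai]
  have hc : Commute (σ (i+1)) (descWord σ a (i-1)) :=
    comm_desc n σ hcomm (by omega) (by omega) ha (by omega) (Or.inl (by omega))
  have hc2 : Commute (σ i) (descWord σ (i+2) b) :=
    comm_desc n σ hcomm (by omega) (by omega) (by omega) hb (Or.inr (by omega))
  rw [e1, e2]
  simp only [mul_assoc]
  rw [← hc.eq, braid_assoc' n σ hbraid (by omega) (by omega), swap_mul hc2.eq.symm]


def garWord {G : Type*} [Group G] (σ : ℕ → G) (a b : ℕ) : G :=
  ((List.range (b + 1 - a)).map (fun i => descWord σ (a + i) b)).prod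

theorem gar_empty (σ : ℕ → G) {a b : ℕ} (h : b + 1 ≤ a) : garWord σ a b = 1 := by
  unfold garWord; rw [Nat.sub_eq_zero_of_le h]; rfl

theorem gar_front (σ : ℕ → G) {a b : ℕ} (h : a ≤ b) :
    garWord σ a b = descWord σ a b * garWord σ (a+1) b := by
  unfold garWord
  rw [show b + 1 - a = (b - a) + 1 by omega, show b + 1 - (a+1) = b - a by omega,
    List.range_succ_eq_map, List.map_cons, List.prod_cons, List.map_map]
  have hf : ((fun i => descWord σ (a + i) b) ∘ Nat.succ) = (fun i => descWord σ (a + 1 + i) b) := by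
    funext i; show descWord σ (a + (i+1)) b = descWord σ (a+1+i) b; congr 1; omega
  rw [hf, Nat.add_zero]

theorem gar_single (σ : ℕ → G) (a : ℕ) : garWord σ a a = σ a := by
  rw [gar_front σ (le_refl a), gar_empty σ (by omega), mul_one, desc_single]

theorem comm_gar (n : ℕ) (σ : ℕ → G)
    (hcomm : ∀ i j, 1 ≤ i → i + 2 ≤ j → j ≤ n → σ i * σ j = σ j * σ i)
    {j a b : ℕ} (hj1 : 1 ≤ j) (hjn : j ≤ n) (h1a : 1 ≤ a) (hbn : b ≤ n)
    (hsep : b + 2 ≤ j) : Commute (σ j) (garWord σ a b) := by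
  unfold garWord
  apply Commute.list_prod_right
  intro x hx
  rw [List.mem_map] at hx
  obtain ⟨i, hi, rfl⟩ := hx
  exact comm_desc n σ hcomm hj1 hjn (by omega) hbn (Or.inl (by omega))

theorem comm_desc_asc (n : ℕ) (σ : ℕ → G)
    (hcomm : ∀ i j, 1 ≤ i → i + 2 ≤ j → j ≤ n → σ i * σ j = σ j * σ i)
    {a c d b : ℕ} (h1a : 1 ≤ a) (hcn : c ≤ n) (hbn : b ≤ n) (hsep : c + 2 ≤ d) :
    Commute (descWord σ a c) (ascWord σ d b) := by
  unfold ascWord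
  apply Commute.list_prod_right
  intro x hx
  rw [List.mem_map] at hx
  obtain ⟨i, hi, rfl⟩ := hx
  rw [List.mem_range] at hi
  exact (comm_desc n σ hcomm (by omega) (by omega) h1a hcn (Or.inl (by omega))).symm

/-- up-shift of a descending word through an ascending full window -/
theorem asc_shift_desc (n : ℕ) (σ : ℕ → G)
    (hcomm : ∀ i j, 1 ≤ i → i + 2 ≤ j → j ≤ n → σ i * σ j = σ j * σ i)
    (hbraid : ∀ i, 1 ≤ i → i + 1 ≤ n → σ i * σ (i + 1) * σ i = σ (i + 1) * σ i * σ (i + 1))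
    {a b d : ℕ} (ha : 1 ≤ a) (hb : b ≤ n) (had : a ≤ d) :
    ∀ c, c + 1 ≤ b → ascWord σ a b * descWord σ d c = descWord σ (d+1) (c+1) * ascWord σ a b := by
  intro c
  induction c with
  | zero =>
    intro _; rw [desc_empty σ (by omega), desc_empty σ (by omega), mul_one, one_mul]
  | succ c ih =>
    intro hc
    by_cases hdc : d ≤ c + 1
    · rw [desc_front σ (by omega) hdc, show c + 1 - 1 = c by omega,
        desc_front σ (show 1 ≤ d + 1 by omega) (show d + 1 ≤ c + 1 + 1 by omega),
        show c + 1 + 1 - 1 = c + 1 by omega]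
      rw [← mul_assoc, asc_shift n σ hcomm hbraid ha hb (by omega) (by omega),
        mul_assoc, ih (by omega), ← mul_assoc]
    · rw [desc_empty σ (by omega), desc_empty σ (by omega), mul_one, one_mul]

/-- up-shift of an ascending word through an ascending full window -/
theorem asc_shift_asc (n : ℕ) (σ : ℕ → G)
    (hcomm : ∀ i j, 1 ≤ i → i + 2 ≤ j → j ≤ n → σ i * σ j = σ j * σ i)
    (hbraid : ∀ i, 1 ≤ i → i + 1 ≤ n → σ i * σ (i + 1) * σ i = σ (i + 1) * σ i * σ (i + 1))
    {a b d : ℕ} (ha : 1 ≤ a) (hb : b ≤ n) (had : a ≤ d) :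
    ∀ c, c + 1 ≤ b → ascWord σ a b * ascWord σ d c = ascWord σ (d+1) (c+1) * ascWord σ a b := by
  intro c
  induction c with
  | zero =>
    intro _
    rw [asc_empty σ (a := d) (b := 0) (by omega), asc_empty σ (a := d+1) (b := 0+1) (by omega),
      mul_one, one_mul]
  | succ c ih =>
    intro hc
    by_cases hdc : d ≤ c + 1
    · rw [asc_back σ (show 1 ≤ d by omega) hdc, show c + 1 - 1 = c by omega,
        asc_back σ (show 1 ≤ d + 1 by omega) (show d + 1 ≤ c + 1 + 1 by omega),
        show c + 1 + 1 - 1 = c + 1 by omega]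
      rw [← mul_assoc, ih (by omega), mul_assoc,
        asc_shift n σ hcomm hbraid ha hb (by omega) (by omega), ← mul_assoc]
    · rw [asc_empty σ (a := d) (b := c+1) (by omega),
        asc_empty σ (a := d+1) (b := c+1+1) (by omega), mul_one, one_mul]

/-- down-shift of an ascending word through a descending full window -/
theorem desc_shift_asc (n : ℕ) (σ : ℕ → G)
    (hcomm : ∀ i j, 1 ≤ i → i + 2 ≤ j → j ≤ n → σ i * σ j = σ j * σ i)
    (hbraid : ∀ i, 1 ≤ i → i + 1 ≤ n → σ i * σ (i + 1) * σ i = σ (i + 1) * σ i * σ (i + 1))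
    {a b d : ℕ} (ha : 1 ≤ a) (hb : b ≤ n) (had : a ≤ d) :
    ∀ c, c ≤ b → descWord σ a b * ascWord σ (d+1) c = ascWord σ d (c-1) * descWord σ a b := by
  intro c
  induction c with
  | zero =>
    intro _
    rw [asc_empty σ (a := d+1) (b := 0) (by omega), asc_empty σ (a := d) (b := 0-1) (by omega),
      mul_one, one_mul]
  | succ c ih =>
    intro hc
    rw [show c + 1 - 1 = c by omega]
    by_cases hdc : d + 1 ≤ c + 1
    · rw [asc_back σ (show 1 ≤ d + 1 by omega) hdc, show c + 1 - 1 = c by omega]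
      rw [← mul_assoc, ih (by omega), mul_assoc,
        desc_shift n σ hcomm hbraid ha hb (show a ≤ c by omega) (by omega), ← mul_assoc,
        ← asc_back σ (show 1 ≤ d by omega) (show d ≤ c by omega)]
    · rw [asc_empty σ (a := d+1) (b := c+1) (by omega),
        asc_empty σ (a := d) (b := c) (by omega), mul_one, one_mul]

/-- up-shift of a `garWord` through an ascending full window -/
theorem asc_shift_gar (n : ℕ) (σ : ℕ → G)
    (hcomm : ∀ i j, 1 ≤ i → i + 2 ≤ j → j ≤ n → σ i * σ j = σ j * σ i)
    (hbraid : ∀ i, 1 ≤ i → i + 1 ≤ n → σ i * σ (i + 1) * σ i = σ (i + 1) * σ i * σ (i + 1))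
    {a b c : ℕ} (ha : 1 ≤ a) (hb : b ≤ n) (hc : c + 1 ≤ b) :
    ∀ t d, a ≤ d → c + 1 - d = t → ascWord σ a b * garWord σ d c = garWord σ (d+1) (c+1) * ascWord σ a b := by
  intro t
  induction t with
  | zero =>
    intro d had hdt
    rw [gar_empty σ (by omega), gar_empty σ (by omega), mul_one, one_mul]
  | succ t ih =>
    intro d had hdt
    rw [gar_front σ (show d ≤ c by omega), gar_front σ (show d + 1 ≤ c + 1 by omega),
      ← mul_assoc, asc_shift_desc n σ hcomm hbraid ha hb had c hc, mul_assoc,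
      ih (d+1) (by omega) (by omega), ← mul_assoc]

theorem shuffle {u v w z : G} (h : u * v = w * z) (x : G) : u * (v * x) = w * (z * x) := by
  rw [← mul_assoc, h, mul_assoc]

theorem rot (n : ℕ) (σ : ℕ → G)
    (hcomm : ∀ i j, 1 ≤ i → i + 2 ≤ j → j ≤ n → σ i * σ j = σ j * σ i)
    (hbraid : ∀ i, 1 ≤ i → i + 1 ≤ n → σ i * σ (i + 1) * σ i = σ (i + 1) * σ i * σ (i + 1))
    {a b : ℕ} (ha : 1 ≤ a) (hb : b ≤ n) (hab : a ≤ b) :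
    descWord σ a b * ascWord σ (a+1) b = ascWord σ a b * descWord σ a (b-1) := by
  rcases Nat.eq_or_lt_of_le hab with rfl | hlt
  · rw [desc_single, asc_empty σ (a := a+1) (b := a) (by omega), asc_single,
      desc_empty σ (a := a) (b := a - 1) (by omega), mul_one]
  · obtain ⟨m, rfl⟩ : ∃ m, b = m + 2 := ⟨b - 2, by omega⟩
    rw [show m + 2 - 1 = m + 1 by omega]
    have hd1 : descWord σ a (m+2) = σ (m+2) * descWord σ a (m+1) := by
      rw [desc_front σ ha (by omega), show m+2-1 = m+1 by omega]
    have ha1 : ascWord σ (a+1) (m+2) = ascWord σ (a+1) (m+1) * σ (m+2) := by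
      rw [asc_back σ (by omega) (by omega), show m+2-1 = m+1 by omega]
    have ha2 : ascWord σ a (m+2) = ascWord σ a m * σ (m+1) * σ (m+2) := by
      rw [asc_back σ ha (by omega), show m+2-1 = m+1 by omega, asc_back σ ha (by omega),
        show m+1-1 = m by omega]
    have hd2 : descWord σ a (m+1) = σ (m+1) * descWord σ a m := by
      rw [desc_front σ ha (by omega), show m+1-1 = m by omega]
    have hsh : descWord σ a (m+1) * ascWord σ (a+1) (m+1) = ascWord σ a m * descWord σ a (m+1) := by
      have := desc_shift_asc n σ hcomm hbraid (a := a) (b := m+1) (d := a) ha (by omega)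
        (le_refl a) (m+1) (le_refl (m+1))
      rwa [show m+1-1 = m by omega] at this
    have hc1 : Commute (σ (m+2)) (ascWord σ a m) :=
      comm_asc n σ hcomm (by omega) hb ha (by omega) (Or.inl (by omega))
    have hc2 : Commute (σ (m+2)) (descWord σ a m) :=
      comm_desc n σ hcomm (by omega) hb ha (by omega) (Or.inl (by omega))
    have hb3 : ∀ x : G, σ (m+2) * (σ (m+1) * (σ (m+2) * x))
        = σ (m+1) * (σ (m+2) * (σ (m+1) * x)) := by
      intro x
      have := braid_assoc' n σ hbraid (i := m+1) (by omega) (by omega) x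
      rwa [show m+1+1 = m+2 by omega] at this
    rw [hd1, ha1, ha2]
    simp only [mul_assoc]
    rw [shuffle hsh, swap_mul hc1.eq, hd2]
    simp only [mul_assoc]
    rw [hc2.symm.eq, hb3]

theorem gad (n : ℕ) (σ : ℕ → G)
    (hcomm : ∀ i j, 1 ≤ i → i + 2 ≤ j → j ≤ n → σ i * σ j = σ j * σ i)
    (hbraid : ∀ i, 1 ≤ i → i + 1 ≤ n → σ i * σ (i + 1) * σ i = σ (i + 1) * σ i * σ (i + 1)) :
    ∀ t a b, 1 ≤ a → b ≤ n → a ≤ b → b - a = t →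
      garWord σ a b = ascWord σ a b * garWord σ a (b-1) := by
  intro t
  induction t with
  | zero =>
    intro a b ha hb hab ht
    have hba : b = a := by omega
    rw [hba, gar_single, asc_single, gar_empty σ (a := a) (b := a-1) (by omega), mul_one]
  | succ t ih =>
    intro a b ha hb hab ht
    rw [gar_front σ hab, ih (a+1) b (by omega) hb (by omega) (by omega), ← mul_assoc,
      rot n σ hcomm hbraid ha hb hab, mul_assoc,
      ← gar_front σ (show a ≤ b - 1 by omega)]

theorem garFlip (n : ℕ) (σ : ℕ → G)
    (hcomm : ∀ i j, 1 ≤ i → i + 2 ≤ j → j ≤ n → σ i * σ j = σ j * σ i)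
    (hbraid : ∀ i, 1 ≤ i → i + 1 ≤ n → σ i * σ (i + 1) * σ i = σ (i + 1) * σ i * σ (i + 1)) :
    ∀ t a b i, 1 ≤ a → b ≤ n → a ≤ i → i ≤ b → b - a = t →
      garWord σ a b * σ i = σ (a + b - i) * garWord σ a b := by
  intro t
  induction t with
  | zero =>
    intro a b i ha hb hai hib ht
    have hba : b = a := by omega
    have hia : i = a := by omega
    rw [hba, hia, gar_single, show a + a - a = a by omega]
  | succ t ih =>
    intro a b i ha hb hai hib ht
    rcases Nat.eq_or_lt_of_le hai with rfl | hlt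
    · rw [gad n σ hcomm hbraid (t+1) a b ha hb (by omega) ht, mul_assoc,
        ih a (b-1) a ha (by omega) (le_refl a) (by omega) (by omega),
        show a + (b-1) - a = b - 1 by omega, ← mul_assoc (ascWord σ a b),
        asc_shift n σ hcomm hbraid ha hb (show a ≤ b - 1 by omega) (show b - 1 + 1 ≤ b by omega),
        show b - 1 + 1 = b by omega, show a + b - a = b by omega, mul_assoc]
    · rw [gar_front σ (show a ≤ b by omega), mul_assoc,
        ih (a+1) b i (by omega) hb (by omega) hib (by omega),
        show a+1+b-i = (a+b-i)+1 by omega, ← mul_assoc,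
        desc_shift n σ hcomm hbraid ha hb (show a ≤ a+b-i by omega) (show (a+b-i)+1 ≤ b by omega),
        mul_assoc]

theorem flip_word (n : ℕ) (σ : ℕ → G)
    (hcomm : ∀ i j, 1 ≤ i → i + 2 ≤ j → j ≤ n → σ i * σ j = σ j * σ i)
    (hbraid : ∀ i, 1 ≤ i → i + 1 ≤ n → σ i * σ (i + 1) * σ i = σ (i + 1) * σ i * σ (i + 1))
    {a b : ℕ} (ha : 1 ≤ a) (hb : b ≤ n) (hab : a ≤ b) :
    ∀ c, c ≤ b → garWord σ a b * ascWord σ a c = descWord σ (a + b - c) b * garWord σ a b := by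
  intro c
  induction c with
  | zero =>
    intro _
    rw [asc_empty σ (a := a) (b := 0) (by omega),
      desc_empty σ (a := a + b - 0) (b := b) (by omega), mul_one, one_mul]
  | succ c ih =>
    intro hc
    by_cases hac : a ≤ c + 1
    · rw [asc_back σ ha hac, show c+1-1 = c by omega, ← mul_assoc, ih (by omega), mul_assoc,
        garFlip n σ hcomm hbraid (b - a) a b (c+1) ha hb hac (by omega) rfl,
        show a+b-c = a+b-(c+1)+1 by omega, ← mul_assoc,
        ← desc_back σ (show a + b - (c+1) ≤ b by omega)]
    · rw [asc_empty σ (a := a) (b := c+1) (by omega),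
        desc_empty σ (a := a+b-(c+1)) (b := b) (by omega), mul_one, one_mul]

theorem lemM (n : ℕ) (σ : ℕ → G)
    (hcomm : ∀ i j, 1 ≤ i → i + 2 ≤ j → j ≤ n → σ i * σ j = σ j * σ i)
    (hbraid : ∀ i, 1 ≤ i → i + 1 ≤ n → σ i * σ (i + 1) * σ i = σ (i + 1) * σ i * σ (i + 1))
    {a b j : ℕ} (ha : 1 ≤ a) (hb : b ≤ n) (haj : a ≤ j) (hjb : j + 1 ≤ b) :
    descWord σ a j * ascWord σ (a+1) b = ascWord σ a b * descWord σ a (j-1) := by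
  have hsplit : ascWord σ (a+1) b = ascWord σ (a+1) (j+1) * ascWord σ (j+2) b := by
    have := asc_split σ (show 1 ≤ a + 1 by omega) (show a + 1 ≤ (j+1) + 1 by omega) b (by omega)
    rwa [show j+1+1 = j+2 by omega] at this
  have h1 : ascWord σ (a+1) (j+1) = ascWord σ (a+1) j * σ (j+1) := by
    rw [asc_back σ (by omega) (by omega), show j+1-1 = j by omega]
  have h2 : descWord σ a j * ascWord σ (a+1) j = ascWord σ a (j-1) * descWord σ a j :=
    desc_shift_asc n σ hcomm hbraid (a := a) (b := j) (d := a) ha (by omega) (le_refl a) j (le_refl j)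
  have h3 : descWord σ a j = σ j * descWord σ a (j-1) := desc_front σ ha haj
  have hc1 : Commute (σ (j+1)) (descWord σ a (j-1)) :=
    comm_desc n σ hcomm (by omega) (by omega) ha (by omega) (Or.inl (by omega))
  have hc2 : Commute (descWord σ a (j-1)) (ascWord σ (j+2) b) :=
    comm_desc_asc n σ hcomm ha (by omega) hb (by omega)
  have hsplit2 : ascWord σ a b = ascWord σ a (j+1) * ascWord σ (j+2) b := by
    have := asc_split σ ha (show a ≤ (j+1) + 1 by omega) b (by omega)
    rwa [show j+1+1 = j+2 by omega] at this
  have h4 : ascWord σ a (j+1) = ascWord σ a (j-1) * (σ j * σ (j+1)) := by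
    rw [asc_back σ ha (by omega), show j+1-1 = j by omega, asc_back σ ha haj, mul_assoc]
  rw [hsplit, h1, hsplit2, h4]
  simp only [mul_assoc]
  rw [shuffle h2, h3]
  simp only [mul_assoc]
  rw [swap_mul hc1.eq.symm, hc2.eq]

theorem powL (n : ℕ) (σ : ℕ → G)
    (hcomm : ∀ i j, 1 ≤ i → i + 2 ≤ j → j ≤ n → σ i * σ j = σ j * σ i)
    (hbraid : ∀ i, 1 ≤ i → i + 1 ≤ n → σ i * σ (i + 1) * σ i = σ (i + 1) * σ i * σ (i + 1))
    {a b : ℕ} (ha : 1 ≤ a) (hb : b ≤ n) :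
    ∀ j, j + 1 ≤ b → descWord σ a j * (ascWord σ (a+1) b)^(j+1-a) = (ascWord σ a b)^(j+1-a) := by
  intro j
  induction j with
  | zero =>
    intro _
    rw [show 0+1-a = 0 by omega, pow_zero, pow_zero, desc_empty σ (a := a) (b := 0) (by omega),
      one_mul]
  | succ j ih =>
    intro hj
    by_cases haj : a ≤ j + 1
    · rw [show j+1+1-a = (j+1-a)+1 by omega, pow_succ', ← mul_assoc,
        lemM n σ hcomm hbraid ha hb haj (by omega), show j+1-1 = j by omega, mul_assoc,
        ih (by omega), ← pow_succ']
    · rw [show j+1+1-a = 0 by omega, pow_zero, pow_zero,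
        desc_empty σ (a := a) (b := j+1) (by omega), one_mul]

theorem lemH (n : ℕ) (σ : ℕ → G)
    (hcomm : ∀ i j, 1 ≤ i → i + 2 ≤ j → j ≤ n → σ i * σ j = σ j * σ i)
    (hbraid : ∀ i, 1 ≤ i → i + 1 ≤ n → σ i * σ (i + 1) * σ i = σ (i + 1) * σ i * σ (i + 1)) :
    ∀ t a b, 1 ≤ a → b ≤ n → a ≤ b → b - a = t →
      garWord σ a (b-1) * garWord σ a b = (ascWord σ a b)^(b-a+1) := by
  intro t
  induction t with
  | zero =>
    intro a b ha hb hab ht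
    have hba : b = a := by omega
    rw [hba, gar_empty σ (a := a) (b := a-1) (by omega), gar_single, one_mul,
      show a-a+1 = 1 by omega, pow_one, asc_single]
  | succ t ih =>
    intro a b ha hb hab ht
    have hgad : garWord σ a b = ascWord σ a b * garWord σ a (b-1) :=
      gad n σ hcomm hbraid (t+1) a b ha hb hab ht
    have hascb : ascWord σ a b = ascWord σ a (b-1) * σ b := asc_back σ ha (by omega)
    have hfw : garWord σ a (b-1) * ascWord σ a (b-1)
        = descWord σ a (b-1) * garWord σ a (b-1) := by
      have := flip_word n σ hcomm hbraid (a := a) (b := b-1) ha (by omega) (by omega)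
        (b-1) (le_refl _)
      rwa [show a + (b-1) - (b-1) = a by omega] at this
    have hgad2 : garWord σ a (b-1) = ascWord σ a (b-1) * garWord σ a (b-1-1) :=
      gad n σ hcomm hbraid t a (b-1) ha (by omega) (by omega) (by omega)
    have hcom : Commute (σ b) (garWord σ a (b-1-1)) :=
      comm_gar n σ hcomm (by omega) hb ha (by omega) (by omega)
    have hih : garWord σ a (b-1-1) * garWord σ a (b-1) = (ascWord σ a (b-1))^(b-1-a+1) :=
      ih a (b-1) ha (by omega) (by omega) (by omega)
    have hpow : ascWord σ a b * (ascWord σ a (b-1))^(b-a)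
        = (ascWord σ (a+1) b)^(b-a) * ascWord σ a b := by
      have hsemi : SemiconjBy (ascWord σ a b) (ascWord σ a (b-1)) (ascWord σ (a+1) b) := by
        have := asc_shift_asc n σ hcomm hbraid (a := a) (b := b) (d := a) ha hb (le_refl a)
          (b-1) (by omega)
        unfold SemiconjBy
        rwa [show b-1+1 = b by omega] at this
      exact hsemi.pow_right (b-a)
    have hL : descWord σ a (b-1) * (ascWord σ (a+1) b)^(b-a) = (ascWord σ a b)^(b-a) := by
      have := powL n σ hcomm hbraid ha hb (b-1) (by omega)
      rwa [show b-1+1-a = b-a by omega] at this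
    have hexp : b - 1 - a + 1 = b - a := by omega
    calc garWord σ a (b-1) * garWord σ a b
        = garWord σ a (b-1) * (ascWord σ a (b-1) * (σ b * garWord σ a (b-1))) := by
          rw [hgad, hascb]; simp only [mul_assoc]
      _ = descWord σ a (b-1) * (garWord σ a (b-1) * (σ b * garWord σ a (b-1))) := by
          rw [← mul_assoc, hfw, mul_assoc]
      _ = descWord σ a (b-1) * (ascWord σ a (b-1) * (garWord σ a (b-1-1) * (σ b * garWord σ a (b-1)))) := by
          rw [hgad2]; simp only [mul_assoc]
      _ = descWord σ a (b-1) * (ascWord σ a (b-1) * (σ b * (garWord σ a (b-1-1) * garWord σ a (b-1)))) := by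
          rw [swap_mul hcom.eq.symm]
      _ = descWord σ a (b-1) * (ascWord σ a (b-1) * (σ b * (ascWord σ a (b-1))^(b-a))) := by
          rw [hih, hexp]
      _ = descWord σ a (b-1) * (ascWord σ a b * (ascWord σ a (b-1))^(b-a)) := by
          rw [hascb]; simp only [mul_assoc]
      _ = descWord σ a (b-1) * ((ascWord σ (a+1) b)^(b-a) * ascWord σ a b) := by
          rw [hpow]
      _ = (ascWord σ a b)^(b-a) * ascWord σ a b := by
          rw [← mul_assoc, hL]
      _ = (ascWord σ a b)^(b-a+1) := by rw [pow_succ]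

theorem twist (n : ℕ) (σ : ℕ → G)
    (hcomm : ∀ i j, 1 ≤ i → i + 2 ≤ j → j ≤ n → σ i * σ j = σ j * σ i)
    (hbraid : ∀ i, 1 ≤ i → i + 1 ≤ n → σ i * σ (i + 1) * σ i = σ (i + 1) * σ i * σ (i + 1))
    {a b : ℕ} (ha : 1 ≤ a) (hb : b ≤ n) (hab : a ≤ b) :
    (ascWord σ a b)^(b-a+2) = (garWord σ a b)^2 := by
  rw [pow_two]
  nth_rewrite 1 [gad n σ hcomm hbraid (b-a) a b ha hb hab rfl]
  rw [mul_assoc, lemH n σ hcomm hbraid (b-a) a b ha hb hab rfl, ← pow_succ',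
    show b-a+1+1 = b-a+2 by omega]

theorem powS (n : ℕ) (σ : ℕ → G)
    (hcomm : ∀ i j, 1 ≤ i → i + 2 ≤ j → j ≤ n → σ i * σ j = σ j * σ i)
    (hbraid : ∀ i, 1 ≤ i → i + 1 ≤ n → σ i * σ (i + 1) * σ i = σ (i + 1) * σ i * σ (i + 1)) :
    ∀ k, k + 1 ≤ n → (descWord σ 1 n)^k * σ n = σ (n - k) * (descWord σ 1 n)^k := by
  intro k
  induction k with
  | zero => intro _; rw [pow_zero, one_mul, mul_one, Nat.sub_zero]
  | succ k ih =>
    intro hk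
    rw [pow_succ', mul_assoc, ih (by omega), ← mul_assoc,
      show n - k = (n - (k+1)) + 1 by omega,
      desc_shift n σ hcomm hbraid (a := 1) (b := n) (i := n - (k+1)) (le_refl 1) (le_refl n)
        (by omega) (by omega), mul_assoc, ← pow_succ']

theorem powT (n : ℕ) (σ : ℕ → G)
    (hcomm : ∀ i j, 1 ≤ i → i + 2 ≤ j → j ≤ n → σ i * σ j = σ j * σ i)
    (hbraid : ∀ i, 1 ≤ i → i + 1 ≤ n → σ i * σ (i + 1) * σ i = σ (i + 1) * σ i * σ (i + 1)) :
    ∀ k, k ≤ n → (σ n * descWord σ 1 n)^k = descWord σ (n-k+1) n * (descWord σ 1 n)^k := by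
  intro k
  induction k with
  | zero =>
    intro _
    rw [pow_zero, pow_zero, mul_one, desc_empty σ (a := n-0+1) (b := n) (by omega)]
  | succ k ih =>
    intro hk
    rw [pow_succ, ih (by omega), mul_assoc,
      ← mul_assoc ((descWord σ 1 n)^k) (σ n) (descWord σ 1 n),
      powS n σ hcomm hbraid k (by omega), mul_assoc (σ (n-k)), ← pow_succ, ← mul_assoc,
      ← desc_back σ (show n - k ≤ n by omega), show n - k = n - (k+1) + 1 by omega]
end

/-- In the Artin braid group `B_{n+1}` with generators `σ 1, …, σ n` (formulated
universally: in any group with elements satisfying the Artin braid relations),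
`(σ_n² σ_{n-1} σ_{n-2} ⋯ σ_1)ⁿ = (σ_1 σ_2 ⋯ σ_n)^{n+1}`, the full twist `Δ_{n+1}²`. -/
theorem kummer_lift_pow_eq_full_twist {G : Type*} [Group G] (n : ℕ) (hn : 1 ≤ n) (σ : ℕ → G)
    (hcomm : ∀ i j, 1 ≤ i → i + 2 ≤ j → j ≤ n → σ i * σ j = σ j * σ i)
    (hbraid : ∀ i, 1 ≤ i → i + 1 ≤ n →
      σ i * σ (i + 1) * σ i = σ (i + 1) * σ i * σ (i + 1)) :
    ((σ n) ^ 2 * descWord σ 1 (n - 1)) ^ n = (ascWord σ 1 n) ^ (n + 1) := by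
  have h0 : σ n ^ 2 * descWord σ 1 (n-1) = σ n * descWord σ 1 n := by
    rw [desc_front σ (le_refl 1) hn, pow_two, mul_assoc]
  rw [h0, powT n σ hcomm hbraid n (le_refl n), show n - n + 1 = 1 by omega, ← pow_succ']
  have ht : (ascWord σ 1 n)^(n+1) = (garWord σ 1 n)^2 := by
    have := twist n σ hcomm hbraid (a := 1) (b := n) (le_refl 1) (le_refl n) hn
    rwa [show n - 1 + 2 = n + 1 by omega] at this
  have hg : garWord σ 1 n * (ascWord σ 1 n)^(n+1) = (descWord σ 1 n)^(n+1) * garWord σ 1 n := by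
    have h1 : SemiconjBy (garWord σ 1 n) (ascWord σ 1 n) (descWord σ 1 n) := by
      have := flip_word n σ hcomm hbraid (a := 1) (b := n) (le_refl 1) (le_refl n) hn
        n (le_refl n)
      unfold SemiconjBy
      rwa [show 1 + n - n = 1 by omega] at this
    exact h1.pow_right (n+1)
  rw [ht] at hg ⊢
  have hcan : (descWord σ 1 n)^(n+1) * garWord σ 1 n = (garWord σ 1 n)^2 * garWord σ 1 n := by
    rw [← hg, ← pow_succ', ← pow_succ]
  exact mul_right_cancel hcan
end

section
/- Let p(y) = y³ − a₁y² + a₂y − a₃ ∈ ℝ[y] be a monic cubic with exactly one real root t₁ and complex conjugate non-real roots t₂ and t₃ = conj(t₂). Then the polynomial q(y) = y³ − a₁ y² + ((a₁² + a₂)/4) y − (a₁a₂ − a₃)/8 has as its roots exactly the half-sums (t₂+t₃)/2, (t₁+t₃)/2, (t₁+t₂)/2; in particular q has exactly one real root, namely the common real part Re(t₂) = (t₂+t₃)/2 of the two complex conjugate roots of p. -/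
open Complex

/-- Let `p(y) = y³ − a₁y² + a₂y − a₃ ∈ ℝ[y]` be a monic real cubic with exactly one real
root `t₁` and complex conjugate non-real roots `t₂` and `t₃ = conj t₂`.  Then the cubic
`q(y) = y³ − a₁y² + ((a₁² + a₂)/4)y − (a₁a₂ − a₃)/8` has as its roots exactly the
half-sums `(t₂+t₃)/2`, `(t₁+t₃)/2`, `(t₁+t₂)/2`; in particular `q` has exactly one real
root, namely the common real part `Re t₂` of the complex conjugate roots of `p`. -/
theorem halfsum_cubic (a₁ a₂ a₃ : ℝ) (t₁ : ℝ) (t₂ : ℂ) (ht₂ : t₂.im ≠ 0)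
    (hp : ∀ y : ℂ, y ^ 3 - (a₁ : ℂ) * y ^ 2 + (a₂ : ℂ) * y - (a₃ : ℂ) =
      (y - (t₁ : ℂ)) * (y - t₂) * (y - (starRingEnd ℂ) t₂)) :
    (∀ y : ℂ, y ^ 3 - (a₁ : ℂ) * y ^ 2 + (((a₁ : ℂ) ^ 2 + (a₂ : ℂ)) / 4) * y -
        ((a₁ : ℂ) * (a₂ : ℂ) - (a₃ : ℂ)) / 8 =
      (y - (t₂ + (starRingEnd ℂ) t₂) / 2) * (y - ((t₁ : ℂ) + (starRingEnd ℂ) t₂) / 2) *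
        (y - ((t₁ : ℂ) + t₂) / 2)) ∧
    (∀ r : ℝ, r ^ 3 - a₁ * r ^ 2 + ((a₁ ^ 2 + a₂) / 4) * r - (a₁ * a₂ - a₃) / 8 = 0
      ↔ r = t₂.re) := by
  set t₃ := (starRingEnd ℂ) t₂ with ht₃
  have h0 := hp 0
  have h1 := hp 1
  have hm := hp (-1)
  have c3 : (a₃ : ℂ) = t₁ * t₂ * t₃ := by linear_combination -h0
  have c1 : (a₁ : ℂ) = t₁ + t₂ + t₃ := by
    linear_combination (-(1:ℂ)/2) * h1 + (-(1:ℂ)/2) * hm + h0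
  have c2 : (a₂ : ℂ) = t₁ * t₂ + t₁ * t₃ + t₂ * t₃ := by
    linear_combination ((1:ℂ)/2) * h1 + (-(1:ℂ)/2) * hm
  have main : ∀ y : ℂ, y ^ 3 - (a₁ : ℂ) * y ^ 2 + (((a₁ : ℂ) ^ 2 + (a₂ : ℂ)) / 4) * y -
        ((a₁ : ℂ) * (a₂ : ℂ) - (a₃ : ℂ)) / 8 =
      (y - (t₂ + t₃) / 2) * (y - ((t₁ : ℂ) + t₃) / 2) *
        (y - ((t₁ : ℂ) + t₂) / 2) := by
    intro y
    rw [c1, c2, c3]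
    ring
  refine ⟨main, fun r => ?_⟩
  have hmain := main (r : ℂ)
  constructor
  · intro h
    have hC : ((r : ℂ) - (t₂ + t₃) / 2) * ((r : ℂ) - ((t₁ : ℂ) + t₃) / 2) *
        ((r : ℂ) - ((t₁ : ℂ) + t₂) / 2) = 0 := by
      rw [← hmain]
      have : ((r ^ 3 - a₁ * r ^ 2 + ((a₁ ^ 2 + a₂) / 4) * r - (a₁ * a₂ - a₃) / 8 : ℝ) : ℂ) = 0 := by
        rw [h]; simp
      push_cast at this
      linear_combination this
    rcases mul_eq_zero.1 hC with hC | hC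
    · rcases mul_eq_zero.1 hC with hC | hC
      · have h' := sub_eq_zero.1 hC
        rw [ht₃, Complex.add_conj] at h'
        have : (r : ℂ) = (t₂.re : ℂ) := by rw [h']; push_cast; ring
        exact_mod_cast this
      · exfalso
        have := congrArg Complex.im (sub_eq_zero.1 hC)
        simp [ht₃, Complex.div_im] at this
        exact ht₂ (by linarith [this])
    · exfalso
      have := congrArg Complex.im (sub_eq_zero.1 hC)
      simp [ht₃, Complex.div_im] at this
      exact ht₂ (by linarith [this])
  · intro h
    subst h
    have hre : ((t₂.re : ℂ)) - (t₂ + t₃) / 2 = 0 := by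
      rw [ht₃]
      rw [Complex.add_conj]
      push_cast
      ring
    have : ((t₂.re : ℂ)) ^ 3 - (a₁ : ℂ) * (t₂.re : ℂ) ^ 2 + (((a₁ : ℂ) ^ 2 + (a₂ : ℂ)) / 4) * (t₂.re : ℂ) -
        ((a₁ : ℂ) * (a₂ : ℂ) - (a₃ : ℂ)) / 8 = 0 := by
      rw [hmain, hre, zero_mul, zero_mul]
    exact_mod_cast this
end

section
/- Let f ∈ ℂ⟦x,y⟧ with f(0,0) = 0 and f(0,y) ≠ 0, let m := ord f(0,y) (so 1 ≤ m < ∞), and suppose the Milnor number μ := dim_ℂ ℂ⟦x,y⟧/(f_x, f_y) is finite. Then for every n ≥ 1, the power series g(x,y) := f(x^n, y) satisfies dim_ℂ ℂ⟦x,y⟧/(g_x, g_y) = n·μ + (m − 1)(n − 1). (This is the Milnor number of the Kummer transform at a preimage of a point of type 1, where m is the intersection multiplicity of the original curve with the coordinate axis x = 0 at the point.) -/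
/-!
Write `A = x^(n-1)`, `B = f_x(xⁿ, y)` and `C = f_y(xⁿ, y)`, so that `(g_x, g_y) = (A·B, C)`.
Since `ℂ⟦x,y⟧` is free over `ℂ⟦xⁿ,y⟧` with basis `1, x, …, x^(n-1)`, the quotient by `(B, C)` is
`n` copies of `ℂ⟦x,y⟧/(f_x, f_y)`, of dimension `n·μ`. As `C(0,y) = f_y(0,y) ≠ 0`, `x` is a
nonzerodivisor modulo `C`, so multiplication by `A` embeds `ℂ⟦x,y⟧/(B, C)` into `ℂ⟦x,y⟧/(A·B, C)`
with cokernel `ℂ⟦x,y⟧/(A, C)`. Modulo `x^(n-1)`, `C` agrees with `f_y(0,y) = y^(m-1)·unit`, so the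
cokernel is `ℂ⟦x,y⟧/(x^(n-1), y^(m-1))`, of dimension `(n-1)(m-1)`.
-/

noncomputable section

/-- Formal partial derivative `∂f/∂(x_i)` of a two-variable formal power series. -/
def pderiv2 (i : Fin 2) (f : MvPowerSeries (Fin 2) ℂ) : MvPowerSeries (Fin 2) ℂ :=
  fun e => ((e i : ℂ) + 1) * MvPowerSeries.coeff (e + Finsupp.single i 1) f

/-- Substitution `x ↦ xⁿ` in a two-variable formal power series `f(x,y)`:
the coefficient of `x^a y^b` in `f(xⁿ, y)` is the coefficient of `x^(a/n) y^b` of `f`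
when `n ∣ a`, and `0` otherwise. -/
def substX (n : ℕ) (f : MvPowerSeries (Fin 2) ℂ) : MvPowerSeries (Fin 2) ℂ :=
  fun e => if n ∣ e 0
    then MvPowerSeries.coeff (Finsupp.single 0 (e 0 / n) + Finsupp.single 1 (e 1)) f
    else 0

/-- Substitution `x ↦ xⁿ`, `y ↦ yⁿ` in a two-variable formal power series `f(x,y)`. -/
def substXY (n : ℕ) (f : MvPowerSeries (Fin 2) ℂ) : MvPowerSeries (Fin 2) ℂ :=
  fun e => if n ∣ e 0 ∧ n ∣ e 1
    then MvPowerSeries.coeff (Finsupp.single 0 (e 0 / n) + Finsupp.single 1 (e 1 / n)) f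
    else 0

/-- The one-variable power series `f(0, y)`. -/
def restY (f : MvPowerSeries (Fin 2) ℂ) : PowerSeries ℂ :=
  PowerSeries.mk fun b => MvPowerSeries.coeff (Finsupp.single 1 b) f

/-- The one-variable power series `f(x, 0)`. -/
def restX (f : MvPowerSeries (Fin 2) ℂ) : PowerSeries ℂ :=
  PowerSeries.mk fun a => MvPowerSeries.coeff (Finsupp.single 0 a) f

open MvPowerSeries

local notation "ℂ⟦x,y⟧" => MvPowerSeries (Fin 2) ℂ
local notation "𝐱" => (X 0 : ℂ⟦x,y⟧)
local notation "𝐲" => (X 1 : ℂ⟦x,y⟧)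

section ExactSequence

variable {K M N P : Type*} [Field K] [AddCommGroup M] [Module K M] [AddCommGroup N] [Module K N]
  [AddCommGroup P] [Module K P]

lemma Module.finite_and_finrank_eq_add_of_exact [Module.Finite K M] [Module.Finite K P]
    {f : M →ₗ[K] N} {g : N →ₗ[K] P} (hf : Function.Injective f) (hg : Function.Surjective g)
    (hfg : Function.Exact f g) :
    Module.Finite K N ∧ Module.finrank K N = Module.finrank K M + Module.finrank K P := by
  have : Module.Finite K N := .of_exact hfg hg
  refine ⟨this, ?_⟩
  rw [← g.finrank_range_add_finrank_ker, LinearMap.range_eq_top.mpr hg, finrank_top,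
    hfg.linearMap_ker_eq, LinearMap.finrank_range_of_inj hf, add_comm]

end ExactSequence

section QuotientSpanMulPair

variable {K R : Type*} [Field K] [CommRing R] [Algebra K R]

lemma Ideal.finite_and_finrank_quotient_span_mul_pair {A B C : R}
    (hcolon : ∀ t, A * t ∈ Ideal.span {A * B, C} → t ∈ Ideal.span {B, C})
    [Module.Finite K (R ⧸ Ideal.span {B, C})] [Module.Finite K (R ⧸ Ideal.span {A, C})] :
    Module.Finite K (R ⧸ Ideal.span {A * B, C}) ∧
    Module.finrank K (R ⧸ Ideal.span {A * B, C}) =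
      Module.finrank K (R ⧸ Ideal.span {B, C}) + Module.finrank K (R ⧸ Ideal.span {A, C}) := by
  have hmul :
      Ideal.span {B, C} ≤ Submodule.comap (LinearMap.mulLeft R A) (Ideal.span {A * B, C}) := by
    intro t ht
    obtain ⟨u, v, rfl⟩ := Ideal.mem_span_pair.mp ht
    exact Ideal.mem_span_pair.mpr ⟨u, A * v, by simp only [LinearMap.mulLeft_apply]; ring⟩
  have hle : Ideal.span {A * B, C} ≤ Ideal.span {A, C} :=
    Ideal.span_le.mpr <| Set.pair_subset (Ideal.mul_mem_right _ _ (Ideal.subset_span (by simp)))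
      (Ideal.subset_span (by simp))
  let f := (Submodule.mapQ _ _ (LinearMap.mulLeft R A) hmul).restrictScalars K
  let g := (Ideal.Quotient.factorₐ K hle).toLinearMap
  refine Module.finite_and_finrank_eq_add_of_exact (f := f) (g := g) ?_
    (Ideal.Quotient.factor_surjective hle) ?_
  · refine (injective_iff_map_eq_zero f).mpr fun x hx => ?_
    obtain ⟨t, rfl⟩ := Ideal.Quotient.mk_surjective x
    exact Ideal.Quotient.eq_zero_iff_mem.mpr (hcolon t (Ideal.Quotient.eq_zero_iff_mem.mp hx))
  · refine LinearMap.exact_iff.mpr (le_antisymm (fun x hx => ?_) ?_)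
    · obtain ⟨t, rfl⟩ := Ideal.Quotient.mk_surjective x
      obtain ⟨u, v, rfl⟩ := Ideal.mem_span_pair.mp (Ideal.Quotient.eq_zero_iff_mem.mp hx)
      refine ⟨Ideal.Quotient.mk _ u, Ideal.Quotient.eq.mpr (Ideal.mem_span_pair.mpr ⟨0, -v, ?_⟩)⟩
      simp only [LinearMap.mulLeft_apply]
      ring
    · rintro _ ⟨x, rfl⟩
      obtain ⟨t, rfl⟩ := Ideal.Quotient.mk_surjective x
      exact Ideal.Quotient.eq_zero_iff_mem.mpr
        (Ideal.mul_mem_right _ _ (Ideal.subset_span (by simp)))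

end QuotientSpanMulPair

def bideg (a b : ℕ) : Fin 2 →₀ ℕ := Finsupp.single 0 a + Finsupp.single 1 b

@[simp] lemma bideg_apply_zero (a b : ℕ) : bideg a b 0 = a := by simp [bideg]
@[simp] lemma bideg_apply_one (a b : ℕ) : bideg a b 1 = b := by simp [bideg]

lemma bideg_eta (e : Fin 2 →₀ ℕ) : bideg (e 0) (e 1) = e := by
  ext i; fin_cases i <;> simp

lemma ext_bideg {f g : ℂ⟦x,y⟧}
    (h : ∀ a b, coeff (bideg a b) f = coeff (bideg a b) g) : f = g :=
  ext fun e => bideg_eta e ▸ h (e 0) (e 1)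

lemma bideg_le_bideg {a b c d : ℕ} : bideg a b ≤ bideg c d ↔ a ≤ c ∧ b ≤ d := by
  simp [Finsupp.le_def, Fin.forall_fin_two]

lemma bideg_sub_bideg (a b c d : ℕ) : bideg a b - bideg c d = bideg (a - c) (b - d) := by
  ext i; fin_cases i <;> simp

lemma coeff_X0_pow_mul (i a b : ℕ) (w : ℂ⟦x,y⟧) :
    coeff (bideg a b) (𝐱 ^ i * w) = if i ≤ a then coeff (bideg (a - i) b) w else 0 := by
  rw [X_pow_eq, show Finsupp.single 0 i = bideg i 0 by simp [bideg], coeff_monomial_mul]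
  simp [bideg_le_bideg, bideg_sub_bideg]

lemma coeff_X1_pow_mul (j a b : ℕ) (w : ℂ⟦x,y⟧) :
    coeff (bideg a b) (𝐲 ^ j * w) = if j ≤ b then coeff (bideg a (b - j)) w else 0 := by
  rw [X_pow_eq, show Finsupp.single 1 j = bideg 0 j by simp [bideg], coeff_monomial_mul]
  simp [bideg_le_bideg, bideg_sub_bideg]

lemma coeff_substX (n a b : ℕ) (f : ℂ⟦x,y⟧) :
    coeff (bideg a b) (substX n f) = if n ∣ a then coeff (bideg (a / n) b) f else 0 := by
  show substX n f (bideg a b) = _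
  simp only [substX, bideg_apply_zero, bideg_apply_one]
  rfl

section KummerComponents

variable {n : ℕ}

lemma hasSubst_X0_pow_X1 (hn : n ≠ 0) : HasSubst ![𝐱 ^ n, 𝐲] :=
  hasSubst_of_constantCoeff_zero (by simp [Fin.forall_fin_two, zero_pow hn])

lemma substX_eq_subst (hn : n ≠ 0) (f : ℂ⟦x,y⟧) :
    substX n f = subst ![𝐱 ^ n, 𝐲] f := by
  have hprod (d : Fin 2 →₀ ℕ) : (d.prod fun s k => (![𝐱 ^ n, 𝐲] s) ^ k)
      = monomial (bideg (n * d 0) (d 1)) 1 := by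
    rw [Finsupp.prod_fintype _ _ (by simp), Fin.prod_univ_two, Matrix.cons_val_zero,
      Matrix.cons_val_one, Matrix.cons_val_fin_one, ← pow_mul, X_pow_eq, X_pow_eq,
      monomial_mul_monomial, one_mul, bideg]
  refine ext_bideg fun a b => ?_
  rw [coeff_substX, coeff_subst (hasSubst_X0_pow_X1 hn)]
  simp_rw [hprod, coeff_monomial]
  split_ifs with hdvd
  · rw [finsum_eq_single _ (bideg (a / n) b)]
    · simp [Nat.mul_div_cancel' hdvd]
    · intro d hd
      rw [if_neg, smul_zero]
      rintro h
      apply hd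
      have h0 := congrArg (· 0) h
      have h1 := congrArg (· 1) h
      simp only [bideg_apply_zero, bideg_apply_one] at h0 h1
      rw [← bideg_eta d, h0, h1, Nat.mul_div_cancel_left _ (Nat.pos_of_ne_zero hn)]
  · rw [finsum_eq_zero_of_forall_eq_zero]
    intro d
    rw [if_neg, smul_zero]
    intro h
    exact hdvd ⟨d 0, by simpa using congrArg (· 0) h⟩

-- Identifying `substX` with Mathlib's substitution makes it an algebra map for free.
def substXHom (hn : n ≠ 0) : ℂ⟦x,y⟧ →ₐ[ℂ] ℂ⟦x,y⟧ :=
  substAlgHom (hasSubst_X0_pow_X1 hn)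

@[simp] lemma substXHom_apply (hn : n ≠ 0) (f : ℂ⟦x,y⟧) :
    substXHom hn f = substX n f := by
  rw [substXHom, coe_substAlgHom, substX_eq_subst hn]

def kummerComponent (n j : ℕ) : ℂ⟦x,y⟧ →ₗ[ℂ] ℂ⟦x,y⟧ where
  toFun h := fun e => coeff (bideg (n * e 0 + j) (e 1)) h
  map_add' u v := funext fun _ => map_add (coeff _) u v
  map_smul' c u := funext fun _ => map_smul (coeff _) c u

lemma coeff_kummerComponent (j a b : ℕ) (h : ℂ⟦x,y⟧) :
    coeff (bideg a b) (kummerComponent n j h) = coeff (bideg (n * a + j) b) h := by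
  show coeff (bideg (n * bideg a b 0 + j) (bideg a b 1)) h = _
  rw [bideg_apply_zero, bideg_apply_one]

lemma sum_X0_pow_mul_substX_kummerComponent (hn : n ≠ 0) (h : ℂ⟦x,y⟧) :
    ∑ j ∈ Finset.range n, 𝐱 ^ j * substX n (kummerComponent n j h) = h := by
  refine ext_bideg fun a b => ?_
  have hdiv := Nat.div_add_mod a n
  rw [map_sum, Finset.sum_eq_single (a % n)]
  · rw [coeff_X0_pow_mul, if_pos (Nat.mod_le a n), coeff_substX, if_pos ⟨a / n, by omega⟩,
      show (a - a % n) / n = a / n by rw [show a - a % n = n * (a / n) by omega,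
        Nat.mul_div_cancel_left _ (Nat.pos_of_ne_zero hn)], coeff_kummerComponent, hdiv]
  · intro j hj hne
    rw [coeff_X0_pow_mul, coeff_substX]
    split_ifs with hja hdvd
    · refine absurd ?_ hne
      rw [← Nat.mod_eq_of_lt (Finset.mem_range.mp hj)]
      exact ((Nat.modEq_iff_dvd' hja).mpr hdvd)
    all_goals rfl
  · simp [Nat.mod_lt a (Nat.pos_of_ne_zero hn)]

lemma kummerComponent_X0_pow_mul_substX {i j : ℕ} (hi : i < n) (hj : j < n) (h : ℂ⟦x,y⟧) :
    kummerComponent n j (𝐱 ^ i * substX n h) = if i = j then h else 0 := by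
  refine ext_bideg fun a b => ?_
  rw [coeff_kummerComponent, coeff_X0_pow_mul]
  split_ifs with hia hij hij
  · subst hij
    rw [coeff_substX, if_pos ⟨a, by omega⟩, show (n * a + i - i) / n = a by
      rw [Nat.add_sub_cancel, Nat.mul_div_cancel_left _ (by omega)]]
  · rw [coeff_substX, if_neg, map_zero]
    rintro ⟨d, hd⟩
    have := congrArg (· % n) (show n * d + i = n * a + j by omega)
    simp only [Nat.mul_add_mod, Nat.mod_eq_of_lt hi, Nat.mod_eq_of_lt hj] at this
    exact hij this
  · omega
  · rw [map_zero]

lemma kummerComponent_mul_substX (hn : n ≠ 0) {j : ℕ} (hj : j < n) (u v : ℂ⟦x,y⟧) :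
    kummerComponent n j (u * substX n v) = kummerComponent n j u * v := by
  conv_lhs => rw [← sum_X0_pow_mul_substX_kummerComponent hn u]
  simp_rw [Finset.sum_mul, mul_assoc, ← substXHom_apply hn, ← map_mul, substXHom_apply, map_sum]
  rw [Finset.sum_congr rfl fun i hi =>
      kummerComponent_X0_pow_mul_substX (Finset.mem_range.mp hi) hj _,
    Finset.sum_ite_eq' (Finset.range n) j, if_pos (Finset.mem_range.mpr hj)]

lemma mem_map_substXHom_iff (hn : n ≠ 0) (I : Ideal ℂ⟦x,y⟧) (h : ℂ⟦x,y⟧) :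
    h ∈ I.map (substXHom hn) ↔ ∀ j < n, kummerComponent n j h ∈ I := by
  refine ⟨fun hh j hj => ?_, fun hc => ?_⟩
  · suffices ∀ r, kummerComponent n j (r * h) ∈ I by simpa using this 1
    induction hh using Submodule.span_induction with
    | mem x hx =>
      obtain ⟨a, ha, rfl⟩ := hx
      intro r
      rw [substXHom_apply, kummerComponent_mul_substX hn hj]
      exact I.mul_mem_left _ ha
    | zero => simp
    | add x y _ _ hx hy => intro r; rw [mul_add, map_add]; exact I.add_mem (hx r) (hy r)
    | smul s x _ hx => intro r; rw [smul_eq_mul, ← mul_assoc]; exact hx (r * s)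
  · rw [← sum_X0_pow_mul_substX_kummerComponent hn h]
    refine Ideal.sum_mem _ fun j hj => Ideal.mul_mem_left _ _ ?_
    rw [← substXHom_apply hn]
    exact Ideal.mem_map_of_mem _ (hc j (Finset.mem_range.mp hj))

def kummerComponents (n : ℕ) (I : Ideal ℂ⟦x,y⟧) :
    ℂ⟦x,y⟧ →ₗ[ℂ] (Fin n → ℂ⟦x,y⟧ ⧸ I) :=
  LinearMap.pi fun j => (Ideal.Quotient.mkₐ ℂ I).toLinearMap ∘ₗ kummerComponent n j

lemma kummerComponents_surjective (I : Ideal ℂ⟦x,y⟧) :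
    Function.Surjective (kummerComponents n I) := by
  intro q
  choose lift hlift using fun j => Ideal.Quotient.mk_surjective (q j)
  refine ⟨∑ i : Fin n, 𝐱 ^ (i : ℕ) * substX n (lift i), funext fun j => ?_⟩
  have hcomp (i : Fin n) : kummerComponent n j (𝐱 ^ (i : ℕ) * substX n (lift i)) =
      if i = j then lift i else 0 := by
    simpa [Fin.val_inj] using kummerComponent_X0_pow_mul_substX i.isLt j.isLt (lift i)
  simp [kummerComponents, hcomp, apply_ite (Ideal.Quotient.mk I), hlift]

lemma ker_kummerComponents (hn : n ≠ 0) (I : Ideal ℂ⟦x,y⟧) :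
    LinearMap.ker (kummerComponents n I) = (I.map (substXHom hn)).restrictScalars ℂ := by
  ext h
  simp [kummerComponents, mem_map_substXHom_iff, funext_iff, Ideal.Quotient.eq_zero_iff_mem,
    Fin.forall_iff]

def quotientMapSubstXHomEquiv (hn : n ≠ 0) (I : Ideal ℂ⟦x,y⟧) :
    (ℂ⟦x,y⟧ ⧸ I.map (substXHom hn)) ≃ₗ[ℂ] (Fin n → ℂ⟦x,y⟧ ⧸ I) :=
  (Submodule.Quotient.restrictScalarsEquiv ℂ _).symm ≪≫ₗ
    Submodule.quotEquivOfEq _ _ (ker_kummerComponents hn I).symm ≪≫ₗ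
    LinearMap.quotKerEquivOfSurjective _ (kummerComponents_surjective I)

instance (hn : n ≠ 0) (I : Ideal ℂ⟦x,y⟧) [Module.Finite ℂ (ℂ⟦x,y⟧ ⧸ I)] :
    Module.Finite ℂ (ℂ⟦x,y⟧ ⧸ I.map (substXHom hn)) :=
  .equiv (quotientMapSubstXHomEquiv hn I).symm

lemma finrank_quotient_map_substXHom (hn : n ≠ 0) (I : Ideal ℂ⟦x,y⟧)
    [Module.Finite ℂ (ℂ⟦x,y⟧ ⧸ I)] :
    Module.finrank ℂ (ℂ⟦x,y⟧ ⧸ I.map (substXHom hn)) =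
      n * Module.finrank ℂ (ℂ⟦x,y⟧ ⧸ I) := by
  rw [(quotientMapSubstXHomEquiv hn I).finrank_eq, Module.finrank_pi_fintype, Finset.sum_const,
    Finset.card_univ, Fintype.card_fin, smul_eq_mul]

lemma span_pair_substX (hn : n ≠ 0) (A B : ℂ⟦x,y⟧) :
    Ideal.span {substX n A, substX n B} = (Ideal.span {A, B}).map (substXHom hn) := by
  simp [Ideal.map_span, Set.image_pair]

end KummerComponents

lemma mem_span_X0_pow_X1_pow_iff {p q : ℕ} {h : ℂ⟦x,y⟧} :
    h ∈ Ideal.span {𝐱 ^ p, 𝐲 ^ q} ↔ ∀ i < p, ∀ j < q, coeff (bideg i j) h = 0 := by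
  constructor
  · rintro hh i hi j hj
    obtain ⟨u, v, rfl⟩ := Ideal.mem_span_pair.mp hh
    rw [map_add, mul_comm u, mul_comm v, coeff_X0_pow_mul, coeff_X1_pow_mul, if_neg (by omega),
      if_neg (by omega), add_zero]
  · intro hc
    let u : ℂ⟦x,y⟧ := fun e => coeff (bideg (e 0 + p) (e 1)) h
    have hu (a b : ℕ) : coeff (bideg a b) u = coeff (bideg (a + p) b) h := by
      show coeff (bideg (bideg a b 0 + p) (bideg a b 1)) h = _
      rw [bideg_apply_zero, bideg_apply_one]
    obtain ⟨v, hv⟩ : 𝐲 ^ q ∣ h - 𝐱 ^ p * u := by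
      refine X_pow_dvd_iff.mpr fun e he => ?_
      rw [← bideg_eta e, map_sub, coeff_X0_pow_mul]
      split_ifs with hp
      · rw [hu, Nat.sub_add_cancel hp, sub_self]
      · rw [sub_zero, hc _ (by omega) _ he]
    exact Ideal.mem_span_pair.mpr ⟨u, v, by rw [mul_comm, mul_comm v, ← hv]; ring⟩

def coeffsBelow (p q : ℕ) : ℂ⟦x,y⟧ →ₗ[ℂ] (Fin p × Fin q → ℂ) :=
  LinearMap.pi fun ij => coeff (bideg ij.1 ij.2)

lemma coeffsBelow_surjective (p q : ℕ) : Function.Surjective (coeffsBelow p q) := by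
  intro c
  refine ⟨fun e => if he : e 0 < p ∧ e 1 < q then c (⟨e 0, he.1⟩, ⟨e 1, he.2⟩) else 0, ?_⟩
  ext ⟨i, j⟩
  show (if he : bideg i j 0 < p ∧ bideg i j 1 < q then
    c (⟨bideg i j 0, he.1⟩, ⟨bideg i j 1, he.2⟩) else 0) = _
  simp

lemma ker_coeffsBelow (p q : ℕ) :
    LinearMap.ker (coeffsBelow p q) = (Ideal.span {𝐱 ^ p, 𝐲 ^ q}).restrictScalars ℂ := by
  ext h
  simp [coeffsBelow, mem_span_X0_pow_X1_pow_iff, funext_iff, Fin.forall_iff]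

def quotientSpanX0PowX1PowEquiv (p q : ℕ) :
    (ℂ⟦x,y⟧ ⧸ Ideal.span {𝐱 ^ p, 𝐲 ^ q}) ≃ₗ[ℂ] (Fin p × Fin q → ℂ) :=
  (Submodule.Quotient.restrictScalarsEquiv ℂ _).symm ≪≫ₗ
    Submodule.quotEquivOfEq _ _ (ker_coeffsBelow p q).symm ≪≫ₗ
    LinearMap.quotKerEquivOfSurjective _ (coeffsBelow_surjective p q)

instance (p q : ℕ) : Module.Finite ℂ (ℂ⟦x,y⟧ ⧸ Ideal.span {𝐱 ^ p, 𝐲 ^ q}) :=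
  .equiv (quotientSpanX0PowX1PowEquiv p q).symm

lemma finrank_quotient_span_X0_pow_X1_pow (p q : ℕ) :
    Module.finrank ℂ (ℂ⟦x,y⟧ ⧸ Ideal.span {𝐱 ^ p, 𝐲 ^ q}) = p * q := by
  simp [(quotientSpanX0PowX1PowEquiv p q).finrank_eq]

lemma coeff_restY (b : ℕ) (w : ℂ⟦x,y⟧) :
    PowerSeries.coeff b (restY w) = coeff (bideg 0 b) w := by
  simp [restY, bideg]

lemma restY_mul (u v : ℂ⟦x,y⟧) : restY (u * v) = restY u * restY v := by
  ext b
  rw [PowerSeries.coeff_mul]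
  simp only [restY, PowerSeries.coeff_mk]
  rw [coeff_mul, Finsupp.antidiagonal_single, Finset.sum_map]
  rfl

lemma X0_dvd_iff_restY_eq_zero {v : ℂ⟦x,y⟧} : 𝐱 ∣ v ↔ restY v = 0 := by
  rw [X_dvd_iff, PowerSeries.ext_iff]
  refine ⟨fun h b => by simpa [coeff_restY] using h (bideg 0 b) (by simp), fun h e he => ?_⟩
  rw [← bideg_eta e, he, ← coeff_restY, h, map_zero]

lemma restY_substX (n : ℕ) (w : ℂ⟦x,y⟧) : restY (substX n w) = restY w := by
  ext b
  rw [coeff_restY, coeff_restY, coeff_substX, if_pos (dvd_zero n), Nat.zero_div]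

lemma X0_ne_zero : 𝐱 ≠ 0 := fun h => by simpa using congrArg (coeff (Finsupp.single 0 1)) h

lemma mem_span_singleton_of_X0_mul_mem {C s : ℂ⟦x,y⟧} (hC : restY C ≠ 0)
    (h : 𝐱 * s ∈ Ideal.span {C}) : s ∈ Ideal.span {C} := by
  obtain ⟨v, hv⟩ := Ideal.mem_span_singleton'.mp h
  have hrv : restY v = 0 := by
    have := congrArg restY hv
    rw [restY_mul, restY_mul, X0_dvd_iff_restY_eq_zero.mp dvd_rfl, zero_mul] at this
    exact (mul_eq_zero.mp this).resolve_right hC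
  obtain ⟨v', rfl⟩ := X0_dvd_iff_restY_eq_zero.mpr hrv
  rw [mul_assoc] at hv
  exact Ideal.mem_span_singleton'.mpr ⟨v', mul_left_cancel₀ X0_ne_zero hv⟩

lemma mem_span_singleton_of_X0_pow_mul_mem {C s : ℂ⟦x,y⟧} (hC : restY C ≠ 0)
    {k : ℕ} (h : 𝐱 ^ k * s ∈ Ideal.span {C}) : s ∈ Ideal.span {C} := by
  induction k generalizing s with
  | zero => simpa using h
  | succ k ih =>
    exact ih (mem_span_singleton_of_X0_mul_mem hC (by rwa [← mul_assoc, ← pow_succ']))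

lemma mem_span_pair_of_X0_pow_mul_mem {B C t : ℂ⟦x,y⟧} (hC : restY C ≠ 0)
    {k : ℕ} (h : 𝐱 ^ k * t ∈ Ideal.span {𝐱 ^ k * B, C}) : t ∈ Ideal.span {B, C} := by
  obtain ⟨u, v, huv⟩ := Ideal.mem_span_pair.mp h
  obtain ⟨w, hw⟩ := Ideal.mem_span_singleton'.mp <|
    mem_span_singleton_of_X0_pow_mul_mem hC (s := t - u * B) (k := k)
      (Ideal.mem_span_singleton'.mpr ⟨v, by rw [mul_sub, ← huv]; ring⟩)
  exact Ideal.mem_span_pair.mpr ⟨u, w, by rw [hw]; ring⟩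

lemma coeff_pderiv2_zero (a b : ℕ) (h : ℂ⟦x,y⟧) :
    coeff (bideg a b) (pderiv2 0 h) = ((a : ℂ) + 1) * coeff (bideg (a + 1) b) h := by
  show ((bideg a b 0 : ℂ) + 1) * coeff (bideg a b + Finsupp.single 0 1) h = _
  rw [bideg_apply_zero, show bideg a b + Finsupp.single 0 1 = bideg (a + 1) b by
    ext i; fin_cases i <;> simp [bideg]]

lemma coeff_pderiv2_one (a b : ℕ) (h : ℂ⟦x,y⟧) :
    coeff (bideg a b) (pderiv2 1 h) = ((b : ℂ) + 1) * coeff (bideg a (b + 1)) h := by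
  show ((bideg a b 1 : ℂ) + 1) * coeff (bideg a b + Finsupp.single 1 1) h = _
  rw [bideg_apply_one, show bideg a b + Finsupp.single 1 1 = bideg a (b + 1) by
    ext i; fin_cases i <;> simp [bideg]]

lemma pderiv2_one_substX (n : ℕ) (f : ℂ⟦x,y⟧) :
    pderiv2 1 (substX n f) = substX n (pderiv2 1 f) := by
  refine ext_bideg fun a b => ?_
  rw [coeff_pderiv2_one, coeff_substX, coeff_substX]
  split_ifs
  · rw [coeff_pderiv2_one]
  · rw [mul_zero]

lemma pderiv2_zero_substX {n : ℕ} (hn : n ≠ 0) (f : ℂ⟦x,y⟧) :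
    pderiv2 0 (substX n f) = (n : ℂ) • (𝐱 ^ (n - 1) * substX n (pderiv2 0 f)) := by
  refine ext_bideg fun a b => ?_
  rw [coeff_pderiv2_zero, coeff_substX, map_smul, coeff_X0_pow_mul, smul_eq_mul]
  by_cases ha : n - 1 ≤ a
  · rw [if_pos ha, coeff_substX, show a + 1 = a - (n - 1) + n by omega]
    simp only [Nat.dvd_add_self_right]
    split_ifs with hdvd
    · obtain ⟨k, hk⟩ := hdvd
      rw [hk, coeff_pderiv2_zero, show n * k + n = n * (k + 1) by ring,
        Nat.mul_div_cancel_left _ (Nat.pos_of_ne_zero hn),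
        Nat.mul_div_cancel_left _ (Nat.pos_of_ne_zero hn)]
      have hk' : (a : ℂ) + 1 = n * (k + 1) := by
        exact_mod_cast (show a + 1 = n * (k + 1) by rw [mul_add, mul_one, ← hk]; omega)
      rw [hk']
      ring
    · rw [mul_zero, mul_zero]
  · rw [if_neg ha, if_neg (Nat.not_dvd_of_pos_of_lt (by omega) (by omega)), mul_zero, mul_zero]

lemma span_pderiv2_substX {n : ℕ} (hn : n ≠ 0) (f : ℂ⟦x,y⟧) :
    Ideal.span {pderiv2 0 (substX n f), pderiv2 1 (substX n f)} =
      Ideal.span {𝐱 ^ (n - 1) * substX n (pderiv2 0 f), substX n (pderiv2 1 f)} := by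
  rw [pderiv2_zero_substX hn, pderiv2_one_substX, Algebra.smul_def, Ideal.span_insert,
    Ideal.span_singleton_mul_left_unit ((isUnit_iff_ne_zero.mpr (by exact_mod_cast hn)).map _),
    ← Ideal.span_insert]

lemma coeff_restY_pderiv2_one (b : ℕ) (f : ℂ⟦x,y⟧) :
    PowerSeries.coeff b (restY (pderiv2 1 f)) =
      ((b : ℂ) + 1) * PowerSeries.coeff (b + 1) (restY f) := by
  rw [coeff_restY, coeff_pderiv2_one, coeff_restY]

lemma order_restY_pderiv2_one {f : ℂ⟦x,y⟧} {m : ℕ} (hm : (restY f).order = m)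
    (hm1 : 1 ≤ m) : (restY (pderiv2 1 f)).order = (m - 1 : ℕ) := by
  obtain ⟨htop, hlow⟩ := PowerSeries.order_eq_nat.mp hm
  refine PowerSeries.order_eq_nat.mpr ⟨?_, fun i hi => ?_⟩
  · rw [coeff_restY_pderiv2_one, Nat.sub_add_cancel hm1]
    exact mul_ne_zero (by norm_cast) htop
  · rw [coeff_restY_pderiv2_one, hlow _ (by omega), mul_zero]

-- `w(0, y)` as an element of `ℂ⟦x,y⟧`, whereas `restY w` lives in `ℂ⟦y⟧`.
def yPart (w : ℂ⟦x,y⟧) : ℂ⟦x,y⟧ :=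
  fun e => if e 0 = 0 then coeff e w else 0

lemma coeff_yPart (a b : ℕ) (w : ℂ⟦x,y⟧) :
    coeff (bideg a b) (yPart w) = if a = 0 then coeff (bideg a b) w else 0 := by
  show (if bideg a b 0 = 0 then coeff (bideg a b) w else 0) = _
  rw [bideg_apply_zero]

lemma X0_pow_dvd_substX_sub_yPart (n : ℕ) (w : ℂ⟦x,y⟧) :
    𝐱 ^ n ∣ substX n w - yPart w := by
  refine X_pow_dvd_iff.mpr fun e he => ?_
  rw [← bideg_eta e, map_sub, coeff_substX, coeff_yPart]
  split_ifs with hdvd h0 h0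
  · rw [h0, Nat.zero_div, sub_self]
  · exact absurd (Nat.le_of_dvd (Nat.pos_of_ne_zero h0) hdvd) (by omega)
  · exact absurd (h0 ▸ dvd_zero n) hdvd
  · rw [sub_zero]

lemma exists_yPart_eq_X1_pow_mul_unit {w : ℂ⟦x,y⟧} {q : ℕ}
    (hw : (restY w).order = q) : ∃ V, IsUnit V ∧ yPart w = 𝐲 ^ q * V := by
  obtain ⟨hq, hlow⟩ := PowerSeries.order_eq_nat.mp hw
  obtain ⟨V, hV⟩ : 𝐲 ^ q ∣ yPart w := by
    refine X_pow_dvd_iff.mpr fun e he => ?_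
    rw [← bideg_eta e, coeff_yPart]
    split_ifs with h0
    · rw [h0, ← coeff_restY, hlow _ (by simpa using he)]
    · rfl
  refine ⟨V, isUnit_iff_constantCoeff.mpr (isUnit_iff_ne_zero.mpr ?_), hV⟩
  have := congrArg (coeff (bideg 0 q)) hV
  rw [coeff_yPart, if_pos rfl, ← coeff_restY, coeff_X1_pow_mul, if_pos le_rfl, Nat.sub_self,
    show bideg 0 0 = 0 by simp [bideg], coeff_zero_eq_constantCoeff_apply] at this
  exact this ▸ hq

lemma span_X0_pow_substX {k n q : ℕ} (hk : k ≤ n) {w : ℂ⟦x,y⟧}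
    (hw : (restY w).order = q) : Ideal.span {𝐱 ^ k, substX n w} = Ideal.span {𝐱 ^ k, 𝐲 ^ q} := by
  obtain ⟨t, ht⟩ := (pow_dvd_pow 𝐱 hk).trans (X0_pow_dvd_substX_sub_yPart n w)
  obtain ⟨V, hV, hyV⟩ := exists_yPart_eq_X1_pow_mul_unit hw
  rw [show substX n w = yPart w + t * 𝐱 ^ k by linear_combination ht,
    Ideal.span_pair_add_mul_left, hyV, mul_comm, Ideal.span_insert,
    Ideal.span_singleton_mul_left_unit hV, ← Ideal.span_insert]

theorem kummer_type1_milnor_general (f : MvPowerSeries (Fin 2) ℂ)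
    (m : ℕ) (hm1 : 1 ≤ m) (hm : (restY f).order = m)
    (hfin : Module.Finite ℂ
      (MvPowerSeries (Fin 2) ℂ ⧸ Ideal.span {pderiv2 0 f, pderiv2 1 f}))
    (μ : ℕ)
    (hμ : Module.finrank ℂ
      (MvPowerSeries (Fin 2) ℂ ⧸ Ideal.span {pderiv2 0 f, pderiv2 1 f}) = μ)
    (n : ℕ) (hn : 1 ≤ n) (g : MvPowerSeries (Fin 2) ℂ) (hg : g = substX n f) :
    Module.Finite ℂ
      (MvPowerSeries (Fin 2) ℂ ⧸ Ideal.span {pderiv2 0 g, pderiv2 1 g}) ∧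
    Module.finrank ℂ
      (MvPowerSeries (Fin 2) ℂ ⧸ Ideal.span {pderiv2 0 g, pderiv2 1 g}) =
        n * μ + (m - 1) * (n - 1) := by
  subst hg
  have hn0 : n ≠ 0 := by omega
  have hfy := order_restY_pderiv2_one hm hm1
  have hcut := span_X0_pow_substX (Nat.sub_le n 1) hfy
  have hC : restY (substX n (pderiv2 1 f)) ≠ 0 := by
    rw [restY_substX]
    exact fun h => ENat.natCast_ne_top _ (hfy ▸ PowerSeries.order_eq_top.mpr h)
  have : Module.Finite ℂ (ℂ⟦x,y⟧ ⧸
      Ideal.span {substX n (pderiv2 0 f), substX n (pderiv2 1 f)}) := by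
    rw [span_pair_substX hn0]; infer_instance
  have : Module.Finite ℂ (ℂ⟦x,y⟧ ⧸ Ideal.span {𝐱 ^ (n - 1), substX n (pderiv2 1 f)}) := by
    rw [hcut]; infer_instance
  obtain ⟨hfinite, hrank⟩ := Ideal.finite_and_finrank_quotient_span_mul_pair (K := ℂ)
    (A := 𝐱 ^ (n - 1)) (B := substX n (pderiv2 0 f))
    fun t ht => mem_span_pair_of_X0_pow_mul_mem hC ht
  rw [span_pderiv2_substX hn0]
  refine ⟨hfinite, ?_⟩
  rw [hrank, span_pair_substX hn0, finrank_quotient_map_substXHom, hμ, hcut,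
    finrank_quotient_span_X0_pow_X1_pow, mul_comm (n - 1)]

/-- Milnor number of the Kummer transform at a preimage of a point of type 1.
Let `f ∈ ℂ⟦x,y⟧` with `f(0,0) = 0`, `f(0,y) ≠ 0` of order `m ≥ 1`, and finite Milnor
number `μ = dim_ℂ ℂ⟦x,y⟧/(f_x, f_y)`.  Then for every `n ≥ 1`, `g(x,y) := f(xⁿ, y)`
satisfies `dim_ℂ ℂ⟦x,y⟧/(g_x, g_y) = n·μ + (m − 1)(n − 1)`. -/
theorem kummer_type1_milnor (f : MvPowerSeries (Fin 2) ℂ)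
    (hf0 : MvPowerSeries.coeff 0 f = 0)
    (m : ℕ) (hm1 : 1 ≤ m) (hm : (restY f).order = m)
    (hfin : Module.Finite ℂ
      (MvPowerSeries (Fin 2) ℂ ⧸ Ideal.span {pderiv2 0 f, pderiv2 1 f}))
    (μ : ℕ)
    (hμ : Module.finrank ℂ
      (MvPowerSeries (Fin 2) ℂ ⧸ Ideal.span {pderiv2 0 f, pderiv2 1 f}) = μ)
    (n : ℕ) (hn : 1 ≤ n) (g : MvPowerSeries (Fin 2) ℂ) (hg : g = substX n f) :
    Module.Finite ℂ
      (MvPowerSeries (Fin 2) ℂ ⧸ Ideal.span {pderiv2 0 g, pderiv2 1 g}) ∧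
    Module.finrank ℂ
      (MvPowerSeries (Fin 2) ℂ ⧸ Ideal.span {pderiv2 0 g, pderiv2 1 g}) =
        n * μ + (m - 1) * (n - 1) :=
  kummer_type1_milnor_general f m hm1 hm hfin μ hμ n hn g hg
end
end

section
/- Let n ≥ 1 and r ≥ 0, let F be the free group on generators γ₁, …, γ_{r+1}, and let φ : F → ℤ/nℤ be the homomorphism with φ(γ_i) = 0 for 1 ≤ i ≤ r and φ(γ_{r+1}) = 1. Then the kernel of φ is a free group of rank nr + 1, freely generated by the nr + 1 elements γ_{r+1}^{-j} γ_i γ_{r+1}^{j} for 1 ≤ i ≤ r and 0 ≤ j ≤ n−1, together with γ_{r+1}^{n}. (This is the algebraic content of the statement that if (γ₁, …, γ_{r+1}) is a geometric basis of π₁(ℂ∖B̃) with γ_{r+1} a meridian of 0, then the listed elements form a geometric basis of the fundamental group of the n-fold cyclic cover of ℂ∖B̃ branched over the corresponding punctures.) -/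
/-!
Sending `x ↦ (x, 0)` and `t ↦ 1` identifies the free group on `X ⊕ {t}` with
`F(X × ℤ) ⋊ ℤ`, where `ℤ` shifts the second coordinate; the generator `(x, j)` of `F(X × ℤ)`
corresponds to `t^{-j} x t^j`. Writing `j = q n + s` with `0 ≤ s < n` identifies `F(X × ℤ)` with
`F((X × Fin n) × ℤ)`, compatibly with the shift by `n`, so the same semidirect product for the
alphabet `X × Fin n` embeds into the one for `X` with image `F(X × ℤ) ⋊ nℤ`, the kernel of the
map to `ℤ/n`. On generators this embedding sends `(x, s) ↦ t^{-s} x t^s` and `t ↦ t^n`.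
-/

/-- The claimed free basis of the kernel: the `n·r + 1` elements
`γ_{r+1}^{-j} γ_i γ_{r+1}^{j}` (for `1 ≤ i ≤ r`, `0 ≤ j ≤ n − 1`) together with
`γ_{r+1}^{n}`, inside the free group on `γ_1, …, γ_{r+1}` (indexed by `Fin (r+1)`,
with `γ_{r+1}` the last generator). -/
def kummerBasis (n r : ℕ) : Fin r × Fin n ⊕ Unit → FreeGroup (Fin (r + 1))
  | Sum.inl (i, j) =>
      (FreeGroup.of (Fin.last r)) ^ (-((j : ℕ) : ℤ)) * FreeGroup.of i.castSucc *
        (FreeGroup.of (Fin.last r)) ^ ((j : ℕ) : ℤ)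
  | Sum.inr _ => (FreeGroup.of (Fin.last r)) ^ n

open Multiplicative SemidirectProduct

namespace FreeGroup

-- The sign makes `sumUnitEquivUnrolled` match `inl (of (x, j))` with `t^{-j} x t^j`.
def shiftAction (X : Type*) : Multiplicative ℤ →* MulAut (FreeGroup (X × ℤ)) where
  toFun g := freeGroupCongr ((Equiv.refl X).prodCongr (Equiv.addRight (-toAdd g)))
  map_one' := by ext; simp
  map_mul' g h := by
    apply MulEquiv.toMonoidHom_injective
    ext ⟨x, j⟩ : 1
    simp [MulAut.mul_def, add_assoc]

@[simp] lemma shiftAction_of {X : Type*} (g : Multiplicative ℤ) (x : X) (j : ℤ) :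
    shiftAction X g (of (x, j)) = of (x, j - toAdd g) := by
  simp [shiftAction, sub_eq_add_neg]

abbrev Unrolled (X : Type*) := FreeGroup (X × ℤ) ⋊[shiftAction X] Multiplicative ℤ

namespace Unrolled

variable {X : Type*}

lemma inr_ofAdd_one_zpow (j : ℤ) :
    (inr (ofAdd 1) : Unrolled X) ^ j = inr (ofAdd j) := by
  rw [← map_zpow, ← ofAdd_zsmul, smul_eq_mul, mul_one]

lemma inr_inv_mul_inl_of_mul_inr (g : Multiplicative ℤ) (x : X) (k : ℤ) :
    ((inr g)⁻¹ * inl (of (x, k)) * inr g : Unrolled X) = inl (of (x, k + toAdd g)) := by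
  rw [← _root_.map_inv, ← inl_aut_inv, ← _root_.map_inv, shiftAction_of]
  simp

end Unrolled

variable (X : Type*)

def toUnrolled : FreeGroup (X ⊕ Unit) →* Unrolled X :=
  FreeGroup.lift (Sum.elim (fun x ↦ inl (of (x, 0))) fun _ ↦ inr (ofAdd 1))

def ofUnrolled : Unrolled X →* FreeGroup (X ⊕ Unit) :=
  SemidirectProduct.lift
    (FreeGroup.lift fun p ↦ of (Sum.inr ()) ^ (-p.2) * of (Sum.inl p.1) * of (Sum.inr ()) ^ p.2)
    (zpowersHom _ (of (Sum.inr ()))) fun g ↦ by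
      ext ⟨x, j⟩
      simp [MulAut.conj]
      group

variable {X}

@[simp] lemma toUnrolled_of_inl (x : X) : toUnrolled X (of (Sum.inl x)) = inl (of (x, 0)) := rfl

@[simp] lemma toUnrolled_of_inr (u : Unit) : toUnrolled X (of (Sum.inr u)) = inr (ofAdd 1) := rfl

@[simp] lemma ofUnrolled_inl_of (x : X) (j : ℤ) :
    ofUnrolled X (inl (of (x, j))) =
      of (Sum.inr ()) ^ (-j) * of (Sum.inl x) * of (Sum.inr ()) ^ j := by
  simp [ofUnrolled]

@[simp] lemma ofUnrolled_inr (g : Multiplicative ℤ) :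
    ofUnrolled X (inr g) = of (Sum.inr ()) ^ toAdd g := by
  simp [ofUnrolled]

variable (X)

def sumUnitEquivUnrolled : FreeGroup (X ⊕ Unit) ≃* Unrolled X :=
  (toUnrolled X).toMulEquiv (ofUnrolled X) (by ext (x | u) <;> simp)
    (by
      refine SemidirectProduct.hom_ext ?_ (MonoidHom.ext_mint ?_)
      · ext ⟨x, j⟩ : 1
        simp [Unrolled.inr_ofAdd_one_zpow, Unrolled.inr_inv_mul_inl_of_mul_inr]
      · simp)

@[simp] lemma coe_sumUnitEquivUnrolled : ⇑(sumUnitEquivUnrolled X) = toUnrolled X := rfl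

@[simp] lemma coe_sumUnitEquivUnrolled_symm : ⇑(sumUnitEquivUnrolled X).symm = ofUnrolled X := rfl

namespace Unrolled

variable (n : ℕ) [NeZero n]

def prodFinIntEquiv : (X × Fin n) × ℤ ≃ X × ℤ :=
  (Equiv.prodAssoc X (Fin n) ℤ).trans
    ((Equiv.refl X).prodCongr ((Equiv.prodComm _ _).trans (Int.divModEquiv n).symm))

def scale : Unrolled (X × Fin n) →* Unrolled X :=
  SemidirectProduct.map (freeGroupCongr (prodFinIntEquiv X n)) (zpowGroupHom (n : ℤ)) fun g ↦ by
    ext ⟨⟨x, s⟩, q⟩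
    simp [prodFinIntEquiv, -map_pow, -map_zpow]
    ring_nf

variable {X n}

lemma scale_mk (a : FreeGroup ((X × Fin n) × ℤ)) (g : Multiplicative ℤ) :
    scale X n ⟨a, g⟩ = ⟨freeGroupCongr (prodFinIntEquiv X n) a, g ^ (n : ℤ)⟩ := rfl

@[simp] lemma scale_inl_of (x : X) (s : Fin n) (q : ℤ) :
    scale X n (inl (of ((x, s), q))) = inl (of (x, q * n + s)) := by
  simp [scale, prodFinIntEquiv]

@[simp] lemma scale_inr (g : Multiplicative ℤ) : scale X n (inr g) = inr (g ^ (n : ℤ)) := by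
  simp [scale]

lemma scale_injective : Function.Injective (scale X n) := by
  rintro ⟨a, g⟩ ⟨b, h⟩ hab
  obtain ⟨hab_left, hab_right⟩ := SemidirectProduct.ext_iff.1 hab
  ext
  · exact (freeGroupCongr _).injective hab_left
  · have := congrArg toAdd hab_right
    simp only [scale_mk, toAdd_zpow] at this
    exact smul_right_injective ℤ (Int.natCast_ne_zero.2 (NeZero.ne n)) this

lemma range_scale :
    (scale X n).range = ((Int.castAddHom (ZMod n)).toMultiplicative.comp rightHom).ker := by
  ext ⟨b, k⟩
  constructor
  · rintro ⟨⟨a, g⟩, h⟩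
    rw [← h, scale_mk, MonoidHom.mem_ker, MonoidHom.comp_apply, rightHom_eq_right]
    simp
  · intro hk
    obtain ⟨q, hq⟩ := (ZMod.intCast_zmod_eq_zero_iff_dvd _ _).1 (congrArg toAdd hk)
    refine ⟨⟨(freeGroupCongr (prodFinIntEquiv X n)).symm b, ofAdd q⟩, ?_⟩
    rw [scale_mk]
    ext
    · exact (freeGroupCongr _).apply_symm_apply b
    · change toAdd (ofAdd q ^ (n : ℤ)) = toAdd k
      rw [toAdd_zpow, toAdd_ofAdd, smul_eq_mul]
      exact hq.symm

end Unrolled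

end FreeGroup

open FreeGroup

/-- Let `F` be the free group on `γ_1, …, γ_{r+1}` and `φ : F → ℤ/nℤ` the homomorphism
sending `γ_i ↦ 0` for `i ≤ r` and `γ_{r+1} ↦ 1`.  Then the kernel of `φ` is free of rank
`n·r + 1`, freely generated by the elements `γ_{r+1}^{-j} γ_i γ_{r+1}^{j}`
(`1 ≤ i ≤ r`, `0 ≤ j ≤ n−1`) together with `γ_{r+1}^{n}`: the homomorphism from the free
group on `n·r + 1` generators induced by these elements is injective with image `ker φ`. -/
theorem kummer_kernel_free_basis (n r : ℕ) (hn : 1 ≤ n)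
    (φ : FreeGroup (Fin (r + 1)) →* Multiplicative (ZMod n))
    (hφ : ∀ i : Fin (r + 1), φ (FreeGroup.of i) =
      Multiplicative.ofAdd (if (i : ℕ) < r then (0 : ZMod n) else 1)) :
    Function.Injective (FreeGroup.lift (kummerBasis n r)) ∧
      (FreeGroup.lift (kummerBasis n r)).range = φ.ker := by
  have : NeZero n := ⟨by omega⟩
  let e : Fin r ⊕ Unit ≃ Fin (r + 1) :=
    (Equiv.optionEquivSumPUnit (Fin r)).symm.trans finSuccEquivLast.symm
  let Θ : FreeGroup (Fin (r + 1)) ≃* Unrolled (Fin r) :=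
    (freeGroupCongr e).symm.trans (sumUnitEquivUnrolled (Fin r))
  have hbasis : FreeGroup.lift (kummerBasis n r) = Θ.symm.toMonoidHom.comp
      ((Unrolled.scale (Fin r) n).comp (sumUnitEquivUnrolled _).toMonoidHom) := by
    ext (⟨i, j⟩ | u) <;> simp [kummerBasis, Θ, e]
  have hφΘ :
      φ = ((Int.castAddHom (ZMod n)).toMultiplicative.comp rightHom).comp Θ.toMonoidHom := by
    ext i
    induction i using Fin.lastCases <;> simp [hφ, Θ, e]
  rw [hbasis, hφΘ, ← MonoidHom.comap_ker]
  refine ⟨Θ.symm.injective.comp (Unrolled.scale_injective.comp (MulEquiv.injective _)), ?_⟩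
  rw [MonoidHom.range_comp, MonoidHom.range_comp,
    MonoidHom.range_eq_top_of_surjective _ (MulEquiv.surjective _), ← MonoidHom.range_eq_map,
    Unrolled.range_scale]
  exact Subgroup.map_equiv_eq_comap_symm' Θ.symm _
end

section
/- Let x₀ ∈ ℝ and consider the cubic polynomial p(y) = (x₀ + y + 1)³ − 27x₀y ∈ ℝ[y] (the restriction of the nodal cubic (x+y+z)³ − 27xyz = 0 to the vertical line x = x₀ in the affine chart z = 1). If p has exactly one real root and t ∈ ℂ ∖ ℝ is a non-real root of p, then the real part r = Re(t) satisfies the cubic equation (r + x₀ + 1)³ = (27/4)·x₀·r + (81/8)·x₀·(x₀ + 1). -/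
/-- Let `x₀ ∈ ℝ` and `p(y) = (x₀ + y + 1)³ − 27x₀y` (the restriction of the nodal cubic
`(x+y+z)³ − 27xyz = 0` to the vertical line `x = x₀` in the chart `z = 1`).  If `p` has
exactly one real root and `t` is a non-real complex root of `p`, then `r = Re t`
satisfies `(r + x₀ + 1)³ = (27/4)·x₀·r + (81/8)·x₀·(x₀ + 1)`. -/
theorem nodal_cubic_real_part_equation (x₀ : ℝ)
    (huniq : ∃! r : ℝ, (x₀ + r + 1) ^ 3 - 27 * x₀ * r = 0)
    (t : ℂ) (ht : t.im ≠ 0)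
    (hroot : ((x₀ : ℂ) + t + 1) ^ 3 - 27 * (x₀ : ℂ) * t = 0) :
    (t.re + x₀ + 1) ^ 3 = 27 / 4 * x₀ * t.re + 81 / 8 * x₀ * (x₀ + 1) := by
  set r := t.re with hr
  set s := t.im with hs
  have hre := congrArg Complex.re hroot
  have him := congrArg Complex.im hroot
  simp [Complex.ext_iff, pow_succ, Complex.mul_re, Complex.mul_im, ← hr, ← hs] at hre him
  -- him : imaginary part equation, divide by s
  have hsq : s ^ 2 = 3 * (x₀ + r + 1) ^ 2 - 27 * x₀ := by
    have h : s * (s ^ 2 - (3 * (x₀ + r + 1) ^ 2 - 27 * x₀)) = 0 := by linear_combination -him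
    rcases mul_eq_zero.mp h with h | h
    · exact absurd h ht
    · linarith
  linear_combination (-1/8 : ℝ) * hre - (3/8 : ℝ) * (x₀ + r + 1) * hsq
end
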